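/- arXiv:2602.13897 — 8 statements merged into one kernel-verified Lean document; each statement's English description precedes it below -/
import Mathlib

section
/- Let v : [0,1]^m → ℝ≥0 be a continuous valuation function and p : [0,1]^m → ℝ≥0 a continuous pricing function such that v − p is concave. Then for every budget b ∈ ℝ≥0, r(p|v,b) = min(b, r(p|v,∞)). -/
noncomputable section

/-- The unit cube `[0,1]^m` in `Fin m → ℝ`. -/
def cube (m : ℕ) : Set (Fin m → ℝ) := Set.Icc 0 1

/-- The affordable set `F(p|b) = {x ∈ D : p x ≤ b}`; the budget `b` lives in the
extended reals, with `b = ⊤` meaning an infinite budget. -/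
def afford {E : Type*} (D : Set E) (p : E → ℝ) (b : EReal) : Set E :=
  {x ∈ D | (p x : EReal) ≤ b}

/-- The maximum net utility `u*(p|v,b) = sup_{x ∈ F(p|b)} (v x - p x)`. -/
def uStar {E : Type*} (D : Set E) (p v : E → ℝ) (b : EReal) : ℝ :=
  ⨆ x : afford D p b, (v x.1 - p x.1)

/-- The demand set `Dem(p|v,b) = {x ∈ F(p|b) : v x - p x = u*(p|v,b)}`. -/
def demand {E : Type*} (D : Set E) (p v : E → ℝ) (b : EReal) : Set E :=
  {x ∈ afford D p b | v x - p x = uStar D p v b}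

/-- The revenue `r(p|v,b) = sup_{x ∈ Dem(p|v,b)} p x`. -/
def revenue {E : Type*} (D : Set E) (p v : E → ℝ) (b : EReal) : ℝ :=
  ⨆ x : demand D p v b, p x.1

/-- For a continuous valuation `v : [0,1]^m → ℝ≥0` and a continuous
pricing function `p : [0,1]^m → ℝ≥0` (monotone, `p 0 = 0`) such that `v - p` is concave,
for every budget `b ≥ 0`, `r(p|v,b) = min (b, r(p|v,∞))`. -/
theorem stmt1 (m : ℕ) (v p : (Fin m → ℝ) → ℝ) (b : ℝ) (hb : 0 ≤ b)
    (hv_nonneg : ∀ x ∈ cube m, 0 ≤ v x) (hv_cont : ContinuousOn v (cube m))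
    (hp_nonneg : ∀ x ∈ cube m, 0 ≤ p x) (hp_cont : ContinuousOn p (cube m))
    (hp_mono : MonotoneOn p (cube m)) (hp0 : p 0 = 0)
    (hconc : ConcaveOn ℝ (cube m) (fun x => v x - p x)) :
    revenue (cube m) p v (b : EReal) = min b (revenue (cube m) p v ⊤) := by
  classical
  set D := cube m with hD
  set f : (Fin m → ℝ) → ℝ := fun x => v x - p x with hfdef
  have hDc : IsCompact D := isCompact_Icc
  have hDcl : IsClosed D := hDc.isClosed
  have hDconv : Convex ℝ D := convex_Icc _ _
  have h0D : (0 : Fin m → ℝ) ∈ D := Set.mem_Icc.mpr ⟨le_refl _, fun i => zero_le_one⟩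
  have hf_cont : ContinuousOn f D := hv_cont.sub hp_cont
  -- afford sets
  have haff_top : afford D p ⊤ = D := by
    ext x; simp [afford]
  have haffb : afford D p (b : EReal) = D ∩ p ⁻¹' Set.Iic b := by
    ext x; simp [afford, EReal.coe_le_coe_iff, Set.mem_Iic]
  have haffb_sub : afford D p (b : EReal) ⊆ D := by
    rw [haffb]; exact Set.inter_subset_left
  have haffb_closed : IsClosed (afford D p (b : EReal)) := by
    rw [haffb]
    exact hp_cont.preimage_isClosed_of_isClosed hDcl isClosed_Iic
  have haffb_compact : IsCompact (afford D p (b : EReal)) :=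
    IsCompact.of_isClosed_subset hDc haffb_closed haffb_sub
  have haffb_ne : (afford D p (b : EReal)).Nonempty :=
    ⟨0, by rw [haffb]; exact ⟨h0D, by simp [hp0, hb]⟩⟩
  have hmemb : ∀ x, x ∈ afford D p (b : EReal) ↔ x ∈ D ∧ p x ≤ b := by
    intro x; rw [haffb]; simp [Set.mem_Iic]
  -- maximizer of f on D : uStar ⊤
  obtain ⟨x₂, hx₂D, hx₂max⟩ := hDc.exists_isMaxOn ⟨0, h0D⟩ hf_cont
  have hx₂max' : ∀ y ∈ D, f y ≤ f x₂ := fun y hy => hx₂max hy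
  have huTop : uStar D p v ⊤ = f x₂ := by
    unfold uStar
    rw [haff_top]
    have : Nonempty D := ⟨⟨0, h0D⟩⟩
    apply le_antisymm
    · exact ciSup_le fun y => hx₂max' y.1 y.2
    · exact le_ciSup ⟨f x₂, by rintro _ ⟨y, rfl⟩; exact hx₂max' y.1 y.2⟩ (⟨x₂, hx₂D⟩ : D)
  -- demand ⊤
  have hdemTop : demand D p v ⊤ = D ∩ f ⁻¹' {uStar D p v ⊤} := by
    ext x; simp [demand, haff_top, hfdef]
  have hdemTop_ne : (demand D p v ⊤).Nonempty :=
    ⟨x₂, by rw [hdemTop]; exact ⟨hx₂D, huTop.symm⟩⟩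
  have hdemTop_sub : demand D p v ⊤ ⊆ D := by rw [hdemTop]; exact Set.inter_subset_left
  have hdemTop_compact : IsCompact (demand D p v ⊤) := by
    rw [hdemTop]
    exact IsCompact.of_isClosed_subset hDc
      (hf_cont.preimage_isClosed_of_isClosed hDcl isClosed_singleton)
      Set.inter_subset_left
  obtain ⟨xs, hxsDem, hxsmax⟩ :=
    hdemTop_compact.exists_isMaxOn hdemTop_ne (hp_cont.mono hdemTop_sub)
  have hxsmax' : ∀ y ∈ demand D p v ⊤, p y ≤ p xs := fun y hy => hxsmax hy
  have hxsD : xs ∈ D := hdemTop_sub hxsDem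
  have hxsf : f xs = uStar D p v ⊤ := by
    rw [hdemTop] at hxsDem; exact hxsDem.2
  have hR : revenue D p v ⊤ = p xs := by
    unfold revenue
    apply le_antisymm
    · have : Nonempty (demand D p v ⊤) := ⟨⟨xs, hxsDem⟩⟩
      exact ciSup_le fun y => hxsmax' y.1 y.2
    · exact le_ciSup ⟨p xs, by rintro _ ⟨y, rfl⟩; exact hxsmax' y.1 y.2⟩
        (⟨xs, hxsDem⟩ : demand D p v ⊤)
  set R := p xs with hRdef
  -- maximizer of f on afford b : uStar b
  obtain ⟨x₁, hx₁aff, hx₁max⟩ :=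
    haffb_compact.exists_isMaxOn haffb_ne (hf_cont.mono haffb_sub)
  have hx₁max' : ∀ y ∈ afford D p (b : EReal), f y ≤ f x₁ := fun y hy => hx₁max hy
  have hx₁D : x₁ ∈ D := haffb_sub hx₁aff
  have hx₁b : p x₁ ≤ b := ((hmemb x₁).mp hx₁aff).2
  have huB : uStar D p v (b : EReal) = f x₁ := by
    unfold uStar
    apply le_antisymm
    · have : Nonempty (afford D p (b : EReal)) := ⟨⟨x₁, hx₁aff⟩⟩
      exact ciSup_le fun y => hx₁max' y.1 y.2
    · exact le_ciSup ⟨f x₁, by rintro _ ⟨y, rfl⟩; exact hx₁max' y.1 y.2⟩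
        (⟨x₁, hx₁aff⟩ : afford D p (b : EReal))
  -- demand b
  have hdemB : demand D p v (b : EReal)
      = afford D p (b : EReal) ∩ f ⁻¹' {uStar D p v (b : EReal)} := by
    ext x; simp [demand, hfdef]
  have hdemB_ne : (demand D p v (b : EReal)).Nonempty :=
    ⟨x₁, by rw [hdemB]; exact ⟨hx₁aff, huB.symm⟩⟩
  have hdemB_sub : demand D p v (b : EReal) ⊆ afford D p (b : EReal) := by
    rw [hdemB]; exact Set.inter_subset_left
  have hdemB_compact : IsCompact (demand D p v (b : EReal)) := by
    rw [hdemB]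
    exact IsCompact.of_isClosed_subset haffb_compact
      (((hf_cont.mono haffb_sub).preimage_isClosed_of_isClosed haffb_closed
        isClosed_singleton))
      Set.inter_subset_left
  obtain ⟨y₁, hy₁Dem, hy₁max⟩ :=
    hdemB_compact.exists_isMaxOn hdemB_ne (hp_cont.mono (hdemB_sub.trans haffb_sub))
  have hy₁max' : ∀ y ∈ demand D p v (b : EReal), p y ≤ p y₁ := fun y hy => hy₁max hy
  have hrevB : revenue D p v (b : EReal) = p y₁ := by
    unfold revenue
    apply le_antisymm
    · have : Nonempty (demand D p v (b : EReal)) := ⟨⟨y₁, hy₁Dem⟩⟩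
      exact ciSup_le fun y => hy₁max' y.1 y.2
    · exact le_ciSup ⟨p y₁, by rintro _ ⟨y, rfl⟩; exact hy₁max' y.1 y.2⟩
        (⟨y₁, hy₁Dem⟩ : demand D p v (b : EReal))
  have hy₁aff : y₁ ∈ afford D p (b : EReal) := hdemB_sub hy₁Dem
  have hy₁b : p y₁ ≤ b := ((hmemb y₁).mp hy₁aff).2
  have hy₁f : f y₁ = uStar D p v (b : EReal) := by
    rw [hdemB] at hy₁Dem; exact hy₁Dem.2
  -- key inequality
  have hfle : f x₁ ≤ f xs := by rw [hxsf, huTop]; exact hx₂max' x₁ hx₁D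
  rcases le_total b R with hcase | hcase
  · -- b ≤ R : revenue b = b
    rw [hR, min_eq_left hcase, hrevB]
    apply le_antisymm hy₁b
    -- find y on segment [x₁, xs] with p y = b
    have hseg : ∀ t ∈ Set.Icc (0:ℝ) 1, (1 - t) • x₁ + t • xs ∈ D := fun t ht =>
      hDconv hx₁D hxsD (by linarith [ht.2]) ht.1 (by ring)
    have hgc : ContinuousOn (fun t : ℝ => p ((1 - t) • x₁ + t • xs)) (Set.Icc 0 1) := by
      apply hp_cont.comp _ hseg
      exact (Continuous.continuousOn (by continuity))
    have hmem : b ∈ Set.Icc (p ((1-(0:ℝ)) • x₁ + (0:ℝ) • xs))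
        (p ((1-(1:ℝ)) • x₁ + (1:ℝ) • xs)) := by
      simp only [sub_zero, one_smul, zero_smul, add_zero, sub_self, zero_add, zero_smul]
      constructor
      · simpa using hx₁b
      · simpa using hcase
    obtain ⟨t, ht, hpt⟩ := intermediate_value_Icc (by norm_num : (0:ℝ) ≤ 1) hgc hmem
    set y := (1 - t) • x₁ + t • xs with hy
    have hyD : y ∈ D := hseg t ht
    have hpy : p y = b := hpt
    have hyaff : y ∈ afford D p (b : EReal) := (hmemb y).mpr ⟨hyD, le_of_eq hpy⟩
    have hconcy : (1 - t) • f x₁ + t • f xs ≤ f y :=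
      hconc.2 hx₁D hxsD (by linarith [ht.2]) ht.1 (by ring)
    have hfy : f y = uStar D p v (b : EReal) := by
      rw [huB]
      apply le_antisymm (hx₁max' y hyaff)
      have h1 : (1 - t) • f x₁ + t • f xs ≥ f x₁ := by
        simp only [smul_eq_mul]
        nlinarith [ht.1, mul_nonneg ht.1 (sub_nonneg.mpr hfle)]
      linarith
    have hyDem : y ∈ demand D p v (b : EReal) := by
      rw [hdemB]; exact ⟨hyaff, hfy⟩
    calc b = p y := hpy.symm
    _ ≤ p y₁ := hy₁max' y hyDem
  · -- R ≤ b : revenue b = R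
    rw [hR, min_eq_right hcase, hrevB]
    have hxsaff : xs ∈ afford D p (b : EReal) := (hmemb xs).mpr ⟨hxsD, hcase⟩
    have hfeq : f x₁ = f xs := le_antisymm hfle (hx₁max' xs hxsaff)
    have hxsDemB : xs ∈ demand D p v (b : EReal) := by
      rw [hdemB]; exact ⟨hxsaff, by simp [huB, hfeq]⟩
    have hy₁DemTop : y₁ ∈ demand D p v ⊤ := by
      rw [hdemTop]
      refine ⟨haffb_sub hy₁aff, ?_⟩
      have : f y₁ = uStar D p v ⊤ := by rw [hy₁f, huB, hfeq, hxsf]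
      exact this
    exact le_antisymm (hxsmax' y₁ hy₁DemTop) (hy₁max' xs hxsDemB)

end
end

section
/- Let f : [0,1]^m → ℝ≥0 be a function and let f̂ = conv(f) be its convex hull. Then: (1) f̂(x) ≤ f(x) for all x ∈ [0,1]^m; (2) f̂ is convex; (3) if f is monotone then f̂ is monotone; (4) if f is MLC then f̂ is continuous. -/
noncomputable section

/-- The lower limit of `f` at `x₀` relative to the domain `D`:
`sup_{δ > 0} inf_{x ∈ D, ‖x - x₀‖_∞ ≤ δ} f x` (computed in the extended reals). -/
def lowerLim {E : Type*} [SeminormedAddCommGroup E] (D : Set E) (f : E → ℝ) (x₀ : E) : EReal :=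
  ⨆ δ : {δ : ℝ // 0 < δ}, ⨅ x : {x : E // x ∈ D ∧ ‖x - x₀‖ ≤ δ.1}, (f x.1 : EReal)

/-- `f` is lower-continuous on `D`. -/
def LowerContOn {E : Type*} [SeminormedAddCommGroup E] (D : Set E) (f : E → ℝ) : Prop :=
  ∀ x₀ ∈ D, lowerLim D f x₀ = (f x₀ : EReal)

/-- The epigraph of `f` relative to the domain `D`:
`{(x, y) : x ∈ D, y ≥ f x}`. -/
def epigraph {E : Type*} (D : Set E) (f : E → ℝ) : Set (E × ℝ) :=
  {q | q.1 ∈ D ∧ f q.1 ≤ q.2}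

/-- The convex hull of a function: `conv(f)(x) = inf {y : (x,y) ∈ conv(epi f)}`. -/
def funConvHull {E : Type*} [AddCommGroup E] [Module ℝ E] (D : Set E) (f : E → ℝ) : E → ℝ :=
  fun x => sInf {y : ℝ | (x, y) ∈ convexHull ℝ (epigraph D f)}

/-! The hull `S = conv (epi f)` is convex and closed upwards, so `f̂` is convex and lies
below `f`. For monotone `f`, the coordinatewise scaling `q ↦ s * q` with `s ∈ [0,1]^m` maps
`epi f`, hence `S`, into itself; this makes `f̂` monotone. For MLC `f` the epigraph is closed
and `f ≤ f 1`, so by Carathéodory `S` is a compact hull plus a vertical ray, hence closed: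
`f̂` is lower semicontinuous. Upper semicontinuity at `x` comes from monotonicity and convexity
along the segment from `x` to the corner `1`, since every point of the cube near `x` lies below
a point of that segment close to `x`. -/

open Set Filter Topology Pointwise

theorem isCompact_convexHull {E : Type*} [NormedAddCommGroup E] [NormedSpace ℝ E]
    [FiniteDimensional ℝ E] {K : Set E} (hK : IsCompact K) : IsCompact (convexHull ℝ K) := by
  classical
  let Φ : ∀ k : ℕ, (Fin k → ℝ) × (Fin k → E) → E := fun k p => ∑ i, p.1 i • p.2 i
  -- Carathéodory: a point of the hull is a convex combination of at most `dim E + 1` points.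
  have hUnion : convexHull ℝ K = ⋃ k ∈ Iic (Module.finrank ℝ E + 1),
      Φ k '' (stdSimplex ℝ (Fin k) ×ˢ univ.pi fun _ => K) := by
    refine subset_antisymm (fun x hx => ?_) (iUnion₂_subset fun k _ => ?_)
    · obtain ⟨ι, _, z, w, hzK, hz, hw₀, hw₁, rfl⟩ :=
        eq_pos_convex_span_of_mem_convexHull hx
      let e := Fintype.equivFin ι
      refine mem_iUnion₂.2 ⟨Fintype.card ι,
        hz.card_le_finrank_succ.trans (Nat.add_le_add_right (Submodule.finrank_le _) 1),
        (w ∘ e.symm, z ∘ e.symm),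
        ⟨⟨fun _ => (hw₀ _).le, ?_⟩, fun _ _ => hzK (mem_range_self _)⟩, ?_⟩
      · simpa only [Function.comp_apply, e.symm.sum_comp] using hw₁
      · simp only [Φ, Function.comp_apply]
        exact e.symm.sum_comp fun i => w i • z i
    · rintro _ ⟨⟨w, v⟩, ⟨⟨hw₀, hw₁⟩, hv⟩, rfl⟩
      exact mem_convexHull_of_exists_fintype w v hw₀ hw₁ (fun i => hv i trivial) rfl
  rw [hUnion]
  exact (finite_Iic _).isCompact_biUnion fun k _ =>
    ((isCompact_stdSimplex ℝ _).prod (isCompact_univ_pi fun _ => hK)).image (by fun_prop)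

section ConvexHullOfFunction

variable {E : Type*} [AddCommGroup E] [Module ℝ E] {D : Set E} {f : E → ℝ} {c : ℝ}
  {x : E} {y : ℝ}

theorem mk_mem_convexHull_epigraph (hx : x ∈ D) : (x, f x) ∈ convexHull ℝ (epigraph D f) :=
  subset_convexHull ℝ _ ⟨hx, le_rfl⟩

theorem mem_convexHull_epigraph_of_le {y' : ℝ} (h : (x, y) ∈ convexHull ℝ (epigraph D f))
    (hy : y ≤ y') : (x, y') ∈ convexHull ℝ (epigraph D f) := by
  have hshift : ((0 : E), y' - y) +ᵥ epigraph D f ⊆ epigraph D f := by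
    rintro _ ⟨q, hq, rfl⟩
    exact ⟨by simpa using hq.1, by simpa using hq.2.trans (le_add_of_nonneg_left (by linarith))⟩
  have hmem : ((0 : E), y' - y) +ᵥ (x, y) ∈
      convexHull ℝ (((0 : E), y' - y) +ᵥ epigraph D f) := by
    rw [convexHull_vadd]
    exact vadd_mem_vadd_set h
  simpa using convexHull_mono hshift hmem

theorem convexHull_epigraph_subset_prod_Ici (hc : ∀ x ∈ D, c ≤ f x) :
    convexHull ℝ (epigraph D f) ⊆ convexHull ℝ D ×ˢ Ici c :=
  convexHull_min (fun _ hq => ⟨subset_convexHull ℝ D hq.1, (hc _ hq.1).trans hq.2⟩)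
    ((convex_convexHull ℝ D).prod (convex_Ici c))

theorem bddBelow_convexHull_epigraph_fiber (hc : ∀ x ∈ D, c ≤ f x) (x : E) :
    BddBelow {y | (x, y) ∈ convexHull ℝ (epigraph D f)} :=
  ⟨c, fun _ hy => (convexHull_epigraph_subset_prod_Ici hc hy).2⟩

theorem funConvHull_le_of_mem (hc : ∀ x ∈ D, c ≤ f x)
    (h : (x, y) ∈ convexHull ℝ (epigraph D f)) : funConvHull D f x ≤ y :=
  csInf_le (bddBelow_convexHull_epigraph_fiber hc x) h

theorem funConvHull_le (hc : ∀ x ∈ D, c ≤ f x) (hx : x ∈ D) : funConvHull D f x ≤ f x :=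
  funConvHull_le_of_mem hc (mk_mem_convexHull_epigraph hx)

theorem convexOn_funConvHull (hD : Convex ℝ D) (hc : ∀ x ∈ D, c ≤ f x) :
    ConvexOn ℝ D (funConvHull D f) := by
  refine ⟨hD, fun x hx x' hx' a b ha hb hab => le_of_forall_pos_le_add fun ε hε => ?_⟩
  obtain ⟨y, hy, hyx⟩ := exists_lt_of_csInf_lt ⟨f x, mk_mem_convexHull_epigraph hx⟩
    (lt_add_of_pos_right (funConvHull D f x) hε)
  obtain ⟨y', hy', hyx'⟩ := exists_lt_of_csInf_lt ⟨f x', mk_mem_convexHull_epigraph hx'⟩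
    (lt_add_of_pos_right (funConvHull D f x') hε)
  have hcomb : (a • x + b • x', a * y + b * y') ∈ convexHull ℝ (epigraph D f) := by
    simpa using convex_convexHull ℝ _ hy hy' ha hb hab
  calc funConvHull D f (a • x + b • x') ≤ a * y + b * y' := funConvHull_le_of_mem hc hcomb
    _ ≤ a * (funConvHull D f x + ε) + b * (funConvHull D f x' + ε) := by
        gcongr
    _ = a • funConvHull D f x + b • funConvHull D f x' + ε := by
        rw [smul_eq_mul, smul_eq_mul]; linear_combination ε * hab

end ConvexHullOfFunction

section UnitCube

variable {ι : Type*}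

theorem eq_mul_of_le_of_nonneg {x x' : ι → ℝ} (hx : 0 ≤ x) (hle : x ≤ x') :
    ∃ s ∈ Icc (0 : ι → ℝ) 1, x = s * x' := by
  -- Where `x' j = 0` also `x j = 0`, so the junk value `x j / 0 = 0` is harmless.
  refine ⟨x / x', ⟨fun j => div_nonneg (hx j) ((hx j).trans (hle j)),
    fun j => div_le_one_of_le₀ (hle j) ((hx j).trans (hle j))⟩, funext fun j => ?_⟩
  by_cases h : x' j = 0
  · have hxj : x j = 0 := le_antisymm (h ▸ hle j) (hx j)
    simp [h, hxj]
  · simp [h]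

theorem mem_convexHull_epigraph_of_le_of_monotoneOn {f : (ι → ℝ) → ℝ}
    (hf : MonotoneOn f (Icc 0 1)) {x x' : ι → ℝ} {y : ℝ} (hx : 0 ≤ x) (hle : x ≤ x')
    (h : (x', y) ∈ convexHull ℝ (epigraph (Icc 0 1) f)) :
    (x, y) ∈ convexHull ℝ (epigraph (Icc 0 1) f) := by
  obtain ⟨s, ⟨hs₀, hs₁⟩, rfl⟩ := eq_mul_of_le_of_nonneg hx hle
  let T := (LinearMap.mulLeft ℝ s).prodMap (LinearMap.id : ℝ →ₗ[ℝ] ℝ)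
  have hT : MapsTo T (epigraph (Icc 0 1) f) (epigraph (Icc 0 1) f) := by
    rintro ⟨q, r⟩ ⟨⟨hq₀, hq₁⟩, hqr⟩
    have hsq : s * q ≤ q := fun j => mul_le_of_le_one_left (hq₀ j) (hs₁ j)
    exact ⟨⟨mul_nonneg hs₀ hq₀, hsq.trans hq₁⟩,
      (hf ⟨mul_nonneg hs₀ hq₀, hsq.trans hq₁⟩ ⟨hq₀, hq₁⟩ hsq).trans hqr⟩
  have hTh : T (x', y) ∈ T '' convexHull ℝ (epigraph (Icc 0 1) f) := mem_image_of_mem T h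
  rw [LinearMap.image_convexHull] at hTh
  exact convexHull_mono (image_subset_iff.2 hT) hTh

theorem monotoneOn_funConvHull {f : (ι → ℝ) → ℝ} (hf₀ : ∀ x ∈ Icc 0 1, 0 ≤ f x)
    (hf : MonotoneOn f (Icc 0 1)) : MonotoneOn (funConvHull (Icc 0 1) f) (Icc 0 1) :=
  fun x hx x' hx' hle =>
    csInf_le_csInf (bddBelow_convexHull_epigraph_fiber hf₀ x)
      ⟨f x', mk_mem_convexHull_epigraph hx'⟩
      fun _ h => mem_convexHull_epigraph_of_le_of_monotoneOn hf hx.1 hle h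

variable [Finite ι]

theorem eventually_le_one_sub_smul_add_smul_one {x : ι → ℝ} (hx : x ≤ 1) {t : ℝ}
    (ht : 0 < t) :
    ∀ᶠ z in 𝓝[Icc 0 1] x, z ≤ (1 - t) • x + t • 1 := by
  refine eventually_all.2 fun j => ?_
  rcases lt_or_ge (x j) 1 with hxj | hxj
  · have hlt : x j < ((1 - t) • x + t • 1) j := by
      simp only [Pi.add_apply, Pi.smul_apply, smul_eq_mul, Pi.one_apply]; nlinarith
    exact nhdsWithin_le_nhds <|
      ((continuous_apply j).tendsto x).eventually (eventually_le_nhds hlt)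
  · filter_upwards [self_mem_nhdsWithin] with z hz
    simp only [Pi.add_apply, Pi.smul_apply, smul_eq_mul, Pi.one_apply,
      le_antisymm (hx j) hxj]
    linarith [show z j ≤ 1 from hz.2 j]

theorem ConvexOn.upperSemicontinuousOn_of_monotoneOn {g : (ι → ℝ) → ℝ}
    (hconv : ConvexOn ℝ (Icc 0 1) g) (hmono : MonotoneOn g (Icc 0 1)) :
    UpperSemicontinuousOn g (Icc 0 1) := by
  intro x hx c hc
  have hlim : Tendsto (fun t : ℝ => (1 - t) * g x + t * g 1) (𝓝[>] 0) (𝓝 (g x)) := by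
    refine tendsto_nhdsWithin_of_tendsto_nhds (Continuous.tendsto' (by fun_prop) _ _ ?_)
    simp
  obtain ⟨t, hct, ht₀, ht₁⟩ :=
    ((hlim.eventually (eventually_lt_nhds hc)).and (Ioo_mem_nhdsGT one_pos)).exists
  have h1 : (1 : ι → ℝ) ∈ Icc 0 1 := ⟨zero_le_one, le_rfl⟩
  have hp : (1 - t) • x + t • 1 ∈ Icc (0 : ι → ℝ) 1 :=
    convex_Icc 0 1 hx h1 (by linarith) ht₀.le (by ring)
  filter_upwards [eventually_le_one_sub_smul_add_smul_one hx.2 ht₀, self_mem_nhdsWithin]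
    with z hz hzD
  calc g z ≤ g ((1 - t) • x + t • 1) := hmono hzD hp hz
    _ ≤ (1 - t) • g x + t • g 1 := hconv.2 hx h1 (by linarith) ht₀.le (by ring)
    _ < c := hct

end UnitCube

theorem LowerContOn.lowerSemicontinuousOn {E : Type*} [SeminormedAddCommGroup E] {D : Set E}
    {f : E → ℝ} (h : LowerContOn D f) : LowerSemicontinuousOn f D := by
  intro x hx c hc
  have hlt : (c : EReal) < lowerLim D f x := by rw [h x hx]; exact_mod_cast hc
  obtain ⟨⟨δ, hδ⟩, hδc⟩ := lt_iSup_iff.1 hlt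
  filter_upwards [inter_mem_nhdsWithin D (Metric.closedBall_mem_nhds x hδ)] with z ⟨hzD, hzx⟩
  have hle := iInf_le (fun z : {z // z ∈ D ∧ ‖z - x‖ ≤ δ} => (f z.1 : EReal))
    ⟨z, hzD, by rwa [← dist_eq_norm, ← Metric.mem_closedBall]⟩
  exact_mod_cast hδc.trans_le hle

section Closedness

variable {E : Type*} [NormedAddCommGroup E] [NormedSpace ℝ E] {D : Set E} {f : E → ℝ}
  {c : ℝ}

theorem isClosed_convexHull_epigraph [FiniteDimensional ℝ E] {B : ℝ} (hD : IsCompact D)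
    (hepi : IsClosed (epigraph D f)) (hc : ∀ x ∈ D, c ≤ f x) (hB : ∀ x ∈ D, f x ≤ B) :
    IsClosed (convexHull ℝ (epigraph D f)) := by
  -- Truncating the epigraph at height `B` leaves a compact set whose hull, plus the vertical
  -- ray, is the whole hull.
  set K := epigraph D f ∩ {q | q.2 ≤ B}
  have hK : IsCompact K :=
    (hD.prod isCompact_Icc).of_isClosed_subset (hepi.inter (isClosed_le continuous_snd
      continuous_const)) fun q hq => ⟨hq.1.1, (hc _ hq.1.1).trans hq.1.2, hq.2⟩
  set R : Set (E × ℝ) := {0} ×ˢ Ici 0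
  have hR : IsClosed R := isClosed_singleton.prod isClosed_Ici
  suffices h : convexHull ℝ (epigraph D f) = convexHull ℝ K + R by
    rw [h]; exact hR.add_left_of_isCompact (isCompact_convexHull hK)
  refine subset_antisymm (convexHull_min (fun q hq => ?_)
    ((convex_convexHull ℝ K).add ((convex_singleton _).prod (convex_Ici _)))) ?_
  · refine ⟨(q.1, f q.1), subset_convexHull ℝ K ⟨⟨hq.1, le_rfl⟩, hB _ hq.1⟩,
      (0, q.2 - f q.1), ⟨rfl, sub_nonneg.2 hq.2⟩, ?_⟩
    ext <;> simp
  · rintro _ ⟨p, hp, v, ⟨hv₁, hv₂⟩, rfl⟩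
    have hpv : p + v = (p.1, p.2 + v.2) := by ext <;> simp [show v.1 = 0 from hv₁]
    show p + v ∈ _
    rw [hpv]
    exact mem_convexHull_epigraph_of_le (convexHull_mono inter_subset_left hp)
      (le_add_of_nonneg_right hv₂)

theorem mem_convexHull_epigraph_iff (hS : IsClosed (convexHull ℝ (epigraph D f)))
    (hc : ∀ x ∈ D, c ≤ f x) {x : E} (hx : x ∈ D) {y : ℝ} :
    (x, y) ∈ convexHull ℝ (epigraph D f) ↔ funConvHull D f x ≤ y := by
  refine ⟨funConvHull_le_of_mem hc, fun hy => mem_convexHull_epigraph_of_le ?_ hy⟩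
  exact (hS.preimage (Continuous.prodMk_right x)).csInf_mem
    ⟨f x, mk_mem_convexHull_epigraph hx⟩ (bddBelow_convexHull_epigraph_fiber hc x)

theorem lowerSemicontinuousOn_funConvHull (hD : IsClosed D)
    (hS : IsClosed (convexHull ℝ (epigraph D f))) (hc : ∀ x ∈ D, c ≤ f x) :
    LowerSemicontinuousOn (funConvHull D f) D := by
  rw [lowerSemicontinuousOn_iff_isClosed_epigraph hD]
  convert (hD.preimage continuous_fst).inter hS using 1
  ext ⟨x, y⟩
  exact ⟨fun ⟨hx, hy⟩ => ⟨hx, (mem_convexHull_epigraph_iff hS hc hx).2 hy⟩,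
    fun ⟨hx, h⟩ => ⟨hx, (mem_convexHull_epigraph_iff hS hc hx).1 h⟩⟩

end Closedness

/-- For `f : [0,1]^m → ℝ≥0` with convex hull `f̂ = conv f`:
(1) `f̂ ≤ f` on the cube; (2) `f̂` is convex; (3) if `f` is monotone, so is `f̂`;
(4) if `f` is MLC (monotone and lower-continuous), then `f̂` is continuous. -/
theorem stmt2 (m : ℕ) (f : (Fin m → ℝ) → ℝ) (hf_nonneg : ∀ x ∈ cube m, 0 ≤ f x) :
    (∀ x ∈ cube m, funConvHull (cube m) f x ≤ f x) ∧
    ConvexOn ℝ (cube m) (funConvHull (cube m) f) ∧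
    (MonotoneOn f (cube m) → MonotoneOn (funConvHull (cube m) f) (cube m)) ∧
    (MonotoneOn f (cube m) → LowerContOn (cube m) f →
      ContinuousOn (funConvHull (cube m) f) (cube m)) := by
  have hconv := convexOn_funConvHull (convex_Icc 0 1) hf_nonneg
  refine ⟨fun x => funConvHull_le hf_nonneg, hconv, monotoneOn_funConvHull hf_nonneg,
    fun hmono hlc => ?_⟩
  have hfB : ∀ x ∈ cube m, f x ≤ f 1 := fun x hx => hmono hx ⟨zero_le_one, le_rfl⟩ hx.2
  have hS := isClosed_convexHull_epigraph isCompact_Icc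
    ((lowerSemicontinuousOn_iff_isClosed_epigraph isClosed_Icc).1 hlc.lowerSemicontinuousOn)
    hf_nonneg hfB
  exact continuousOn_iff_lower_upperSemicontinuousOn.2
    ⟨lowerSemicontinuousOn_funConvHull isClosed_Icc hS hf_nonneg,
      hconv.upperSemicontinuousOn_of_monotoneOn (monotoneOn_funConvHull hf_nonneg hmono)⟩

end
end

section
/- Let f : [0,1] → ℝ be a continuous convex function, let S ⊂ ℝ≥0 be a finite nonempty set of non-negative numbers, and let f̂ = disc(f,S). Let β ∈ S, x* = ℓ(f|β), and x̂ = ℓ(f̂|β). Then x* ≤ x̂ and f(x*) ≤ f̂(x̂). -/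
noncomputable section

/-- The unit interval `[0,1] ⊆ ℝ`. -/
def unitI : Set ℝ := Set.Icc 0 1

/-- The left derivative of `f` at `x`, as an extended real:
`f'(x) = sup_{δ ∈ (0,x]} (f x - f (x - δ)) / δ`, with `f'(0) = ⊥ = -∞`. -/
def leftD (f : ℝ → ℝ) (x : ℝ) : EReal :=
  ⨆ δ : {δ : ℝ // 0 < δ ∧ δ ≤ x}, (((f x - f (x - δ.1)) / δ.1 : ℝ) : EReal)

/-- `ℓ(f|β)`: the rightmost point of `[0,1]` at which the left derivative of `f`
is at most `β`. -/
def ell (f : ℝ → ℝ) (β : ℝ) : ℝ :=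
  sSup {x ∈ unitI | leftD f x ≤ (β : EReal)}

/-- The `i`-th smallest element of a finite set `S ⊆ ℝ` (`0`-indexed; junk value `0`
when `i ≥ S.card`). So `sortedNth S (i-1)` is the paper's `α_i`. -/
def sortedNth (S : Finset ℝ) (i : ℕ) : ℝ := (S.sort (· ≤ ·)).getD i 0

/-- The breakpoints `z_0 = 0, z_i = ℓ(f|α_i) (1 ≤ i ≤ k-1), z_k = 1` used in the
discretization `disc(f,S)` of `f` along `S = {α_1 < ⋯ < α_k}`. -/
def discKnot (f : ℝ → ℝ) (S : Finset ℝ) (i : ℕ) : ℝ :=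
  if i = 0 then 0 else if i < S.card then ell f (sortedNth S (i - 1)) else 1

/-- The discretization (piecewise-linearization) `disc(f,S) = f 0 + plin(z,α)` of `f`
along `S = {α_1 < ⋯ < α_k}`, where `z_i = ℓ(f|α_i)`.  On `[0,1]` the piecewise-linear
function `plin(z,α)` (which is `0` at `0` and has slope `α_i` on `(z_{i-1}, z_i]`,
with `z_0 = 0` and the last piece extending to `1`) is given by the closed form
`plin(z,α)(x) = ∑_{i=1}^k α_i (min(x, z_i) - min(x, z_{i-1}))` with `z_k := 1`. -/
def disc (f : ℝ → ℝ) (S : Finset ℝ) : ℝ → ℝ := fun x =>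
  f 0 + ∑ i ∈ Finset.range S.card,
    sortedNth S i * (min x (discKnot f S (i + 1)) - min x (discKnot f S i))

/-! Since `f` is continuous, the condition `f'(x) ≤ β` is closed in `x`, so it holds at
`x* = ℓ(f|β)` itself. Write `β = α_j`. For each piece `(z_{i-1}, z_i]` of `f̂`, the point
`min(x*, z_i)` is either the knot `z_i = ℓ(f|α_i)` (if `i < j`) or `x*` (if `i ≥ j`); in both cases
the left derivative of `f` there is at most the slope `α_i`, and summing the resulting secant
bounds over the pieces gives `f(x*) ≤ f̂(x*)`. The slopes of `f̂` on `[0, z_j] ∋ x*` are at most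
`β`, so `x* ≤ x̂`, and `f̂` is nondecreasing because all slopes are non-negative. -/

section LeftDerivative

variable {f : ℝ → ℝ} {x β : ℝ}

theorem leftD_le_iff :
    leftD f x ≤ β ↔ ∀ u, 0 ≤ u → u < x → f x - f u ≤ β * (x - u) := by
  rw [leftD, iSup_le_iff]
  constructor
  · intro h u hu hux
    have hδ : (f x - f (x - (x - u))) / (x - u) ≤ β :=
      EReal.coe_le_coe_iff.mp (h ⟨x - u, by linarith, by linarith⟩)
    rwa [sub_sub_cancel, div_le_iff₀ (by linarith)] at hδ
  · rintro h ⟨δ, hδ, hδx⟩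
    refine EReal.coe_le_coe_iff.mpr ((div_le_iff₀ hδ).mpr ?_)
    simpa using h (x - δ) (by linarith) (by linarith)

theorem sub_le_of_leftD_le {u : ℝ} (h : leftD f x ≤ β) (hu : 0 ≤ u) (hux : u ≤ x) :
    f x - f u ≤ β * (x - u) := by
  rcases hux.eq_or_lt with rfl | hlt
  · simp
  · exact leftD_le_iff.mp h u hu hlt

end LeftDerivative

def ellSet (f : ℝ → ℝ) (β : ℝ) : Set ℝ := {x ∈ unitI | leftD f x ≤ β}

section Ell

variable {f : ℝ → ℝ} {x β : ℝ}

theorem zero_mem_ellSet : 0 ∈ ellSet f β :=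
  ⟨⟨le_rfl, zero_le_one⟩, leftD_le_iff.mpr fun _ hu hu0 => absurd hu0 hu.not_gt⟩

theorem bddAbove_ellSet : BddAbove (ellSet f β) := ⟨1, fun _ hx => hx.1.2⟩

theorem le_ell (hx : x ∈ ellSet f β) : x ≤ ell f β := le_csSup bddAbove_ellSet hx

theorem ell_nonneg : 0 ≤ ell f β := le_ell zero_mem_ellSet

theorem ell_le_one : ell f β ≤ 1 := csSup_le ⟨0, zero_mem_ellSet⟩ fun _ hx => hx.1.2

theorem ell_mono {β' : ℝ} (h : β ≤ β') : ell f β ≤ ell f β' :=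
  csSup_le_csSup bddAbove_ellSet ⟨0, zero_mem_ellSet⟩
    fun _ hx => ⟨hx.1, hx.2.trans (EReal.coe_le_coe_iff.mpr h)⟩

theorem isClosed_ellSet (hf : ContinuousOn f unitI) : IsClosed (ellSet f β) := by
  refine isClosed_of_closure_subset fun x hx => ?_
  have hxI : x ∈ unitI := closure_minimal (fun _ hy => hy.1) isClosed_Icc hx
  refine ⟨hxI, leftD_le_iff.mpr fun u hu hux => ?_⟩
  set C := {y | y ≤ u} ∪ unitI ∩ (fun y => f y - f u - β * (y - u)) ⁻¹' Set.Iic 0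
  have hC : IsClosed C := isClosed_Iic.union <|
    ((hf.sub continuousOn_const).sub (by fun_prop)).preimage_isClosed_of_isClosed
      isClosed_Icc isClosed_Iic
  have hsub : ellSet f β ⊆ C := by
    intro y hy
    rcases le_or_gt y u with hyu | huy
    · exact Or.inl hyu
    · exact Or.inr ⟨hy.1, by simpa using leftD_le_iff.mp hy.2 u hu huy⟩
  rcases closure_minimal hsub hC hx with hxu | ⟨-, hx'⟩
  · exact absurd hux hxu.not_gt
  · simp only [Set.mem_preimage, Set.mem_Iic] at hx'
    linarith

theorem ell_mem_ellSet (hf : ContinuousOn f unitI) : ell f β ∈ ellSet f β :=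
  (isClosed_ellSet hf).csSup_mem ⟨0, zero_mem_ellSet⟩ bddAbove_ellSet

theorem leftD_ell_le (hf : ContinuousOn f unitI) : leftD f (ell f β) ≤ β :=
  (ell_mem_ellSet hf).2

end Ell

section SortedNth

variable {S : Finset ℝ} {i j : ℕ}

theorem sortedNth_eq_getElem (hi : i < S.card) :
    sortedNth S i = (S.sort (· ≤ ·))[i]'(by rwa [Finset.length_sort]) :=
  List.getD_eq_getElem _ _ _

theorem sortedNth_mono (hij : i ≤ j) (hj : j < S.card) : sortedNth S i ≤ sortedNth S j := by
  rw [sortedNth_eq_getElem (hij.trans_lt hj), sortedNth_eq_getElem hj]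
  exact (Finset.pairwise_sort S (· ≤ ·)).rel_get_of_le (Fin.mk_le_mk.mpr hij)

theorem sortedNth_mem (hi : i < S.card) : sortedNth S i ∈ S := by
  rw [sortedNth_eq_getElem hi]
  exact (Finset.mem_sort _).mp (List.getElem_mem _)

theorem exists_sortedNth_eq {β : ℝ} (hβ : β ∈ S) : ∃ m < S.card, sortedNth S m = β := by
  obtain ⟨m, hm, rfl⟩ := List.mem_iff_getElem.mp ((Finset.mem_sort (· ≤ ·)).mpr hβ)
  rw [Finset.length_sort] at hm
  exact ⟨m, hm, sortedNth_eq_getElem hm⟩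

end SortedNth

section DiscKnot

variable {f : ℝ → ℝ} {S : Finset ℝ} {i m : ℕ}

theorem discKnot_zero : discKnot f S 0 = 0 := if_pos rfl

theorem discKnot_card (hS : S.card ≠ 0) : discKnot f S S.card = 1 := by
  rw [discKnot, if_neg hS, if_neg (lt_irrefl _)]

theorem discKnot_succ_of_lt (hi : i + 1 < S.card) :
    discKnot f S (i + 1) = ell f (sortedNth S i) := by
  rw [discKnot, if_neg i.succ_ne_zero, if_pos hi, Nat.add_sub_cancel]

theorem discKnot_succ_of_card_le (hi : S.card ≤ i + 1) : discKnot f S (i + 1) = 1 := by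
  rw [discKnot, if_neg i.succ_ne_zero, if_neg hi.not_gt]

theorem discKnot_nonneg : 0 ≤ discKnot f S i := by
  unfold discKnot; split_ifs
  exacts [le_rfl, ell_nonneg, zero_le_one]

theorem discKnot_le_one : discKnot f S i ≤ 1 := by
  unfold discKnot; split_ifs
  exacts [zero_le_one, ell_le_one, le_rfl]

theorem discKnot_le_succ : discKnot f S i ≤ discKnot f S (i + 1) := by
  rcases i with _ | i
  · exact discKnot_zero.trans_le discKnot_nonneg
  rcases lt_or_ge (i + 2) S.card with hi | hi
  · rw [discKnot_succ_of_lt (by omega), discKnot_succ_of_lt hi]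
    exact ell_mono (sortedNth_mono i.le_succ (by omega))
  · exact (discKnot_succ_of_card_le hi).symm ▸ discKnot_le_one

theorem discKnot_mono : Monotone (discKnot f S) := monotone_nat_of_le_succ fun _ => discKnot_le_succ

theorem discKnot_le_ell (hm : m < S.card) : discKnot f S m ≤ ell f (sortedNth S m) := by
  rcases m with _ | m
  · exact discKnot_zero.trans_le ell_nonneg
  · exact (discKnot_succ_of_lt hm).trans_le (ell_mono (sortedNth_mono m.le_succ hm))

theorem ell_le_discKnot_succ : ell f (sortedNth S m) ≤ discKnot f S (m + 1) := by
  rcases lt_or_ge (m + 1) S.card with hm | hm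
  · exact (discKnot_succ_of_lt hm).ge
  · exact (discKnot_succ_of_card_le hm).symm ▸ ell_le_one

end DiscKnot

/-- The length of `[0, x]` covered by the piece `(z_i, z_{i+1}]`, on which `disc f S` has slope
`sortedNth S i = α_{i+1}`. -/
def discPiece (f : ℝ → ℝ) (S : Finset ℝ) (i : ℕ) (x : ℝ) : ℝ :=
  min x (discKnot f S (i + 1)) - min x (discKnot f S i)

theorem min_sub_min_le_min_sub_min {a b u v : ℝ} (hab : a ≤ b) (huv : u ≤ v) :
    min u b - min u a ≤ min v b - min v a := by
  simp only [min_def]; split_ifs <;> linarith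

section DiscPiece

variable {f : ℝ → ℝ} {S : Finset ℝ} {i : ℕ} {x : ℝ}

theorem disc_eq_sum_discPiece (x : ℝ) :
    disc f S x = f 0 + ∑ i ∈ Finset.range S.card, sortedNth S i * discPiece f S i x :=
  rfl

theorem monotone_discPiece : Monotone (discPiece f S i) :=
  fun _ _ huv => min_sub_min_le_min_sub_min discKnot_le_succ huv

theorem discPiece_eq_zero (hx : x ≤ discKnot f S i) : discPiece f S i x = 0 := by
  rw [discPiece, min_eq_left hx, min_eq_left (hx.trans discKnot_le_succ), sub_self]

theorem sum_discPiece (hS : S.card ≠ 0) (hx : x ∈ unitI) :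
    ∑ i ∈ Finset.range S.card, discPiece f S i x = x := by
  unfold discPiece
  rw [Finset.sum_range_sub (fun i => min x (discKnot f S i)) S.card, discKnot_card hS,
    discKnot_zero, min_eq_left hx.2, min_eq_right hx.1, sub_zero]

theorem monotone_disc (hS : ∀ a ∈ S, 0 ≤ a) : Monotone (disc f S) := fun _ _ huv =>
  add_le_add_right (Finset.sum_le_sum fun _ hi =>
    mul_le_mul_of_nonneg_left (monotone_discPiece huv)
      (hS _ (sortedNth_mem (Finset.mem_range.mp hi)))) _

theorem disc_sub_le {m : ℕ} (hm : m < S.card) {u v : ℝ} (hu : 0 ≤ u) (huv : u ≤ v)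
    (hv : v ≤ discKnot f S (m + 1)) :
    disc f S v - disc f S u ≤ sortedNth S m * (v - u) := by
  have hS : S.card ≠ 0 := Nat.ne_zero_of_lt hm
  have hv1 : v ≤ 1 := hv.trans discKnot_le_one
  have hterm : ∀ i ∈ Finset.range S.card,
      sortedNth S i * (discPiece f S i v - discPiece f S i u)
        ≤ sortedNth S m * (discPiece f S i v - discPiece f S i u) := by
    intro i hi
    rcases le_or_gt i m with him | hmi
    · exact mul_le_mul_of_nonneg_right (sortedNth_mono him hm)
        (sub_nonneg.mpr (monotone_discPiece huv))
    · have hvi : v ≤ discKnot f S i := hv.trans (discKnot_mono hmi)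
      rw [discPiece_eq_zero hvi, discPiece_eq_zero (huv.trans hvi), sub_self, mul_zero, mul_zero]
  calc disc f S v - disc f S u
      = ∑ i ∈ Finset.range S.card, sortedNth S i * (discPiece f S i v - discPiece f S i u) := by
        simp only [disc_eq_sum_discPiece, mul_sub, Finset.sum_sub_distrib]; ring
    _ ≤ ∑ i ∈ Finset.range S.card, sortedNth S m * (discPiece f S i v - discPiece f S i u) :=
        Finset.sum_le_sum hterm
    _ = sortedNth S m * (v - u) := by
        rw [← Finset.mul_sum, Finset.sum_sub_distrib, sum_discPiece hS ⟨hu.trans huv, hv1⟩,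
          sum_discPiece hS ⟨hu, huv.trans hv1⟩]

end DiscPiece

section Comparison

variable {f : ℝ → ℝ} {S : Finset ℝ} {m : ℕ}

theorem leftD_min_ell_discKnot_le (hf : ContinuousOn f unitI) (hm : m < S.card) {i : ℕ}
    (hi : i < S.card) :
    leftD f (min (ell f (sortedNth S m)) (discKnot f S (i + 1))) ≤ sortedNth S i := by
  rcases lt_or_ge i m with him | hmi
  · have hknot : discKnot f S (i + 1) ≤ ell f (sortedNth S m) :=
      (discKnot_mono him).trans (discKnot_le_ell hm)
    rw [min_eq_right hknot, discKnot_succ_of_lt (by omega)]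
    exact leftD_ell_le hf
  · rw [min_eq_left (ell_le_discKnot_succ.trans (discKnot_mono (by omega)))]
    exact (leftD_ell_le hf).trans (EReal.coe_le_coe_iff.mpr (sortedNth_mono hmi hi))

theorem le_disc_ell (hf : ContinuousOn f unitI) (hm : m < S.card) :
    f (ell f (sortedNth S m)) ≤ disc f S (ell f (sortedNth S m)) := by
  set x := ell f (sortedNth S m)
  have hS : S.card ≠ 0 := Nat.ne_zero_of_lt hm
  have hpiece : ∀ i ∈ Finset.range S.card,
      f (min x (discKnot f S (i + 1))) - f (min x (discKnot f S i))
        ≤ sortedNth S i * discPiece f S i x := fun i hi =>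
    sub_le_of_leftD_le (leftD_min_ell_discKnot_le hf hm (Finset.mem_range.mp hi))
      (le_min ell_nonneg discKnot_nonneg) (min_le_min le_rfl discKnot_le_succ)
  have htelescope := Finset.sum_range_sub (fun i => f (min x (discKnot f S i))) S.card
  rw [discKnot_card hS, discKnot_zero, min_eq_left ell_le_one, min_eq_right ell_nonneg]
    at htelescope
  rw [disc_eq_sum_discPiece]
  linarith [Finset.sum_le_sum hpiece]

end Comparison

theorem stmt7_general (f : ℝ → ℝ) (hf_cont : ContinuousOn f unitI)
    (S : Finset ℝ) (hS_nonneg : ∀ a ∈ S, 0 ≤ a)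
    (β : ℝ) (hβ : β ∈ S) :
    ell f β ≤ ell (disc f S) β ∧ f (ell f β) ≤ disc f S (ell (disc f S) β) := by
  obtain ⟨m, hm, rfl⟩ := exists_sortedNth_eq hβ
  have hmem : ell f (sortedNth S m) ∈ ellSet (disc f S) (sortedNth S m) :=
    ⟨⟨ell_nonneg, ell_le_one⟩, leftD_le_iff.mpr fun u hu hux =>
      disc_sub_le hm hu hux.le ell_le_discKnot_succ⟩
  have hle : ell f (sortedNth S m) ≤ ell (disc f S) (sortedNth S m) := le_ell hmem
  exact ⟨hle, (le_disc_ell hf_cont hm).trans (monotone_disc hS_nonneg hle)⟩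

/-- Let `f : [0,1] → ℝ` be continuous and convex, `S ⊆ ℝ≥0` a finite
nonempty set, `f̂ = disc(f,S)`, `β ∈ S`, `x* = ℓ(f|β)` and `x̂ = ℓ(f̂|β)`. Then
`x* ≤ x̂` and `f x* ≤ f̂ x̂`. -/
theorem stmt7 (f : ℝ → ℝ) (hf_cont : ContinuousOn f unitI)
    (hf_conv : ConvexOn ℝ unitI f)
    (S : Finset ℝ) (hS : S.Nonempty) (hS_nonneg : ∀ a ∈ S, 0 ≤ a)
    (β : ℝ) (hβ : β ∈ S) :
    ell f β ≤ ell (disc f S) β ∧ f (ell f β) ≤ disc f S (ell (disc f S) β) :=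
  stmt7_general f hf_cont S hS_nonneg β hβ

end
end

section
/- Let f : [0,1]^m → ℝ≥0 and g : [0,1]^n → ℝ≥0, and define h : [0,1]^{m+n} → ℝ≥0 by h(x,y) = f(x) + g(y). Let ĥ = conv(h), f̂ = conv(f), ĝ = conv(g). Then ĥ(x,y) = f̂(x) + ĝ(y) for all x ∈ [0,1]^m and y ∈ [0,1]^n. -/
noncomputable section

open Set Pointwise

/-- sInf of a sumset. -/
lemma sInf_sumset (A B : Set ℝ) (hA : A.Nonempty) (hB : B.Nonempty)
    (hA' : BddBelow A) (hB' : BddBelow B) : sInf (A + B) = sInf A + sInf B := by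
  have hAB' : BddBelow (A + B) := by
    refine ⟨sInf A + sInf B, ?_⟩
    rintro x ⟨a, ha, b, hb, rfl⟩
    exact add_le_add (csInf_le hA' ha) (csInf_le hB' hb)
  refine le_antisymm ?_ ?_
  · have h1 : ∀ a ∈ A, sInf (A + B) - a ≤ sInf B := by
      intro a ha
      refine le_csInf hB fun b hb => ?_
      have : sInf (A + B) ≤ a + b := csInf_le hAB' ⟨a, ha, b, hb, rfl⟩
      linarith
    have h2 : sInf (A + B) - sInf B ≤ sInf A := by
      refine le_csInf hA fun a ha => ?_
      have := h1 a ha; linarith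
    linarith
  · refine le_csInf (hA.add hB) ?_
    rintro x ⟨a, ha, b, hb, rfl⟩
    exact add_le_add (csInf_le hA' ha) (csInf_le hB' hb)

/-- The combining linear map. -/
def combLM (m n : ℕ) :
    ((Fin m → ℝ) × ℝ) × ((Fin n → ℝ) × ℝ) →ₗ[ℝ] ((Fin m → ℝ) × (Fin n → ℝ)) × ℝ where
  toFun p := ((p.1.1, p.2.1), p.1.2 + p.2.2)
  map_add' p q := by ext i <;> simp <;> ring
  map_smul' c p := by ext i <;> simp <;> ring

lemma epi_prod (m n : ℕ) (f : (Fin m → ℝ) → ℝ) (g : (Fin n → ℝ) → ℝ) :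
    combLM m n '' (epigraph (cube m) f ×ˢ epigraph (cube n) g) =
      epigraph (cube m ×ˢ cube n) (fun z : (Fin m → ℝ) × (Fin n → ℝ) => f z.1 + g z.2) := by
  ext ⟨⟨x, y⟩, c⟩
  constructor
  · rintro ⟨⟨⟨x', a⟩, ⟨y', b⟩⟩, ⟨⟨hx', ha⟩, ⟨hy', hb⟩⟩, heq⟩
    simp only [combLM, LinearMap.coe_mk, AddHom.coe_mk, Prod.mk.injEq] at heq
    obtain ⟨⟨rfl, rfl⟩, rfl⟩ := heq
    exact ⟨⟨hx', hy'⟩, add_le_add ha hb⟩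
  · rintro ⟨⟨hx, hy⟩, hc⟩
    refine ⟨((x, f x), (y, c - f x)), ⟨⟨hx, le_refl _⟩, ⟨hy, by show g y ≤ c - f x; have hc' : f x + g y ≤ c := hc; linarith⟩⟩, ?_⟩
    simp [combLM]

/-- conv(epi f) is bounded below in the last coordinate when f is nonneg on D. -/
lemma convHull_epi_nonneg {E : Type*} [AddCommGroup E] [Module ℝ E] (D : Set E) (f : E → ℝ)
    (hf : ∀ x ∈ D, 0 ≤ f x) :
    convexHull ℝ (epigraph D f) ⊆ (univ : Set E) ×ˢ Ici (0 : ℝ) := by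
  refine convexHull_min ?_ (convex_univ.prod (convex_Ici 0))
  rintro ⟨x, a⟩ ⟨hx, ha⟩
  exact ⟨trivial, le_trans (hf x hx) ha⟩

/-- For `f : [0,1]^m → ℝ≥0` and `g : [0,1]^n → ℝ≥0`, define
`h(x,y) = f x + g y` on `[0,1]^{m+n} = [0,1]^m × [0,1]^n`. Then
`conv(h)(x,y) = conv(f)(x) + conv(g)(y)` for all `x ∈ [0,1]^m`, `y ∈ [0,1]^n`. -/
theorem stmt10 (m n : ℕ) (f : (Fin m → ℝ) → ℝ) (g : (Fin n → ℝ) → ℝ)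
    (hf_nonneg : ∀ x ∈ cube m, 0 ≤ f x) (hg_nonneg : ∀ y ∈ cube n, 0 ≤ g y) :
    ∀ x ∈ cube m, ∀ y ∈ cube n,
      funConvHull (cube m ×ˢ cube n)
          (fun z : (Fin m → ℝ) × (Fin n → ℝ) => f z.1 + g z.2) (x, y) =
        funConvHull (cube m) f x + funConvHull (cube n) g y := by
  intro x hx y hy
  set A : Set ℝ := {a | (x, a) ∈ convexHull ℝ (epigraph (cube m) f)} with hAdef
  set B : Set ℝ := {b | (y, b) ∈ convexHull ℝ (epigraph (cube n) g)} with hBdef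
  have hconv : convexHull ℝ
      (epigraph (cube m ×ˢ cube n) (fun z : (Fin m → ℝ) × (Fin n → ℝ) => f z.1 + g z.2)) =
      combLM m n '' (convexHull ℝ (epigraph (cube m) f) ×ˢ convexHull ℝ (epigraph (cube n) g)) := by
    rw [← epi_prod, ← (combLM m n).image_convexHull, convexHull_prod]
  have hS : {c : ℝ | ((x, y), c) ∈ convexHull ℝ
      (epigraph (cube m ×ˢ cube n) (fun z : (Fin m → ℝ) × (Fin n → ℝ) => f z.1 + g z.2))} =
      A + B := by
    ext c
    simp only [mem_setOf_eq, hconv]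
    constructor
    · rintro ⟨⟨⟨x', a⟩, ⟨y', b⟩⟩, ⟨ha, hb⟩, heq⟩
      simp only [combLM, LinearMap.coe_mk, AddHom.coe_mk, Prod.mk.injEq] at heq
      obtain ⟨⟨rfl, rfl⟩, rfl⟩ := heq
      exact ⟨a, ha, b, hb, rfl⟩
    · rintro ⟨a, ha, b, hb, rfl⟩
      exact ⟨((x, a), (y, b)), ⟨ha, hb⟩, rfl⟩
  have hAne : A.Nonempty := ⟨f x, subset_convexHull ℝ _ ⟨hx, le_refl _⟩⟩
  have hBne : B.Nonempty := ⟨g y, subset_convexHull ℝ _ ⟨hy, le_refl _⟩⟩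
  have hAbdd : BddBelow A := ⟨0, fun a ha => (convHull_epi_nonneg _ f hf_nonneg ha).2⟩
  have hBbdd : BddBelow B := ⟨0, fun b hb => (convHull_epi_nonneg _ g hg_nonneg hb).2⟩
  show sInf _ = sInf A + sInf B
  rw [hS]
  exact sInf_sumset A B hAne hBne hAbdd hBbdd

end
end

section
/- For each j ∈ [m], let p_j : [0,1] → ℝ≥0 be an MLC pricing function and define p : [0,1]^m → ℝ≥0 by p(x) = Σ_{j=1}^m p_j(x_j). For each j ∈ [m], let u_j : [0,1] → ℝ≥0 be a continuous valuation function and define v : [0,1]^m → ℝ≥0 by v(x) = Σ_{j=1}^m u_j(x_j). Then r(p|v,∞) = Σ_{j=1}^m r(p_j|u_j,∞). -/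
noncomputable section

/- ### Auxiliary lemmas -/

lemma afford_top {E : Type*} (D : Set E) (p : E → ℝ) : afford D p ⊤ = D := by
  ext x; simp [afford]

lemma zero_mem_unitI : (0 : ℝ) ∈ unitI := by
  constructor <;> norm_num

lemma one_mem_unitI : (1 : ℝ) ∈ unitI := by
  constructor <;> norm_num

lemma mem_cube_iff {m : ℕ} {x : Fin m → ℝ} : x ∈ cube m ↔ ∀ j, x j ∈ unitI := by
  simp only [cube, unitI, Set.mem_Icc, Pi.le_def]
  constructor
  · rintro ⟨h0, h1⟩ j; exact ⟨h0 j, h1 j⟩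
  · intro h; exact ⟨fun j => (h j).1, fun j => (h j).2⟩

/-- Extraction of an ε-δ lower-semicontinuity statement from `lowerLim f x₀ = f x₀`. -/
lemma lsc_eps {E : Type*} [SeminormedAddCommGroup E] {D : Set E} {f : E → ℝ} {x₀ : E}
    (h : lowerLim D f x₀ = (f x₀ : EReal)) {ε : ℝ} (hε : 0 < ε) :
    ∃ δ > 0, ∀ x ∈ D, ‖x - x₀‖ ≤ δ → f x₀ - ε ≤ f x := by
  have h1 : ((f x₀ - ε : ℝ) : EReal) < lowerLim D f x₀ := by
    rw [h]; exact EReal.coe_lt_coe_iff.mpr (by linarith)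
  unfold lowerLim at h1
  rw [lt_iSup_iff] at h1
  obtain ⟨⟨δ, hδ⟩, h2⟩ := h1
  refine ⟨δ, hδ, fun x hx hxd => ?_⟩
  have h3 := h2.trans_le (iInf_le _ (⟨x, hx, hxd⟩ : {x : E // x ∈ D ∧ ‖x - x₀‖ ≤ δ}))
  exact (EReal.coe_lt_coe_iff.mp h3).le

/-- Upper-semicontinuity ε-δ statement for `u - p` at a point of `unitI`. -/
lemma usc_eps {pf uf : ℝ → ℝ} {x₀ : ℝ}
    (hlc : lowerLim unitI pf x₀ = (pf x₀ : EReal))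
    (hc : ContinuousWithinAt uf unitI x₀) {ε : ℝ} (hε : 0 < ε) :
    ∃ δ > 0, ∀ x ∈ unitI, ‖x - x₀‖ ≤ δ →
      uf x - pf x ≤ (uf x₀ - pf x₀) + ε := by
  obtain ⟨δ₁, hδ₁, h1⟩ := (Metric.continuousWithinAt_iff.mp hc) (ε / 2) (by linarith)
  obtain ⟨δ₂, hδ₂, h2⟩ := lsc_eps hlc (show (0:ℝ) < ε / 2 by linarith)
  refine ⟨min (δ₁ / 2) δ₂, by positivity, fun x hx hxd => ?_⟩
  have hd1 : dist x x₀ < δ₁ := by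
    have : ‖x - x₀‖ ≤ δ₁ / 2 := hxd.trans (min_le_left _ _)
    rw [Real.dist_eq, ← Real.norm_eq_abs]; linarith
  have hu := h1 hx hd1
  rw [Real.dist_eq] at hu
  have hu' : uf x - uf x₀ < ε / 2 := (le_abs_self _).trans_lt hu
  have hp := h2 x hx (hxd.trans (min_le_right _ _))
  linarith

/-- On `unitI`, the net utility `u - p` attains its supremum. -/
lemma exists_max {pf uf : ℝ → ℝ} (hpn : ∀ x ∈ unitI, 0 ≤ pf x)
    (hlc : LowerContOn unitI pf) (hc : ContinuousOn uf unitI) :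
    ∃ z ∈ unitI, ∀ x ∈ unitI, uf x - pf x ≤ uf z - pf z := by
  set g : ℝ → ℝ := fun x => uf x - pf x with hg
  -- bound above
  obtain ⟨w, hw, hwmax⟩ :=
    (isCompact_Icc : IsCompact (Set.Icc (0:ℝ) 1)).exists_isMaxOn ⟨0, zero_mem_unitI⟩ hc
  have hbound : ∀ x ∈ unitI, g x ≤ uf w := fun x hx => by
    have h1 : uf x ≤ uf w := hwmax hx
    have h2 := hpn x hx
    show uf x - pf x ≤ uf w
    linarith
  set S : ℝ := sSup (g '' unitI) with hS
  have hne : (g '' unitI).Nonempty := ⟨g 0, Set.mem_image_of_mem _ zero_mem_unitI⟩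
  have hbdd : BddAbove (g '' unitI) := ⟨uf w, by
    rintro _ ⟨x, hx, rfl⟩; exact hbound x hx⟩
  have hleS : ∀ x ∈ unitI, g x ≤ S := fun x hx => le_csSup hbdd ⟨x, hx, rfl⟩
  -- approximating sequence
  have hseq : ∀ n : ℕ, ∃ x, x ∈ unitI ∧ S - 1 / (n + 1) < g x := by
    intro n
    have hlt : S - 1 / (n + 1 : ℝ) < S := by
      have : (0:ℝ) < 1 / (n + 1) := by positivity
      linarith
    obtain ⟨_, ⟨x, hx, rfl⟩, hgt⟩ := exists_lt_of_lt_csSup hne hlt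
    exact ⟨x, hx, hgt⟩
  choose xs hxsI hxsg using hseq
  obtain ⟨z, hz, φ, hφ, hφt⟩ :=
    (isCompact_Icc : IsCompact (Set.Icc (0:ℝ) 1)).tendsto_subseq hxsI
  refine ⟨z, hz, fun x hx => ?_⟩
  suffices hSz : S ≤ g z by exact (hleS x hx).trans hSz
  by_contra hcon
  push_neg at hcon
  set ε : ℝ := (S - g z) / 2 with hε
  have hεpos : 0 < ε := by rw [hε]; exact div_pos (sub_pos.mpr hcon) two_pos
  obtain ⟨δ, hδ, hδprop⟩ := usc_eps (hlc z hz) (hc z hz) hεpos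
  -- find large n
  obtain ⟨N₁, hN₁⟩ := Metric.tendsto_atTop.mp hφt δ hδ
  obtain ⟨N₂, hN₂⟩ := exists_nat_one_div_lt hεpos
  set n := max N₁ N₂ with hn
  have hdist : dist (xs (φ n)) z < δ := hN₁ n (le_max_left _ _)
  have hnorm : ‖xs (φ n) - z‖ ≤ δ := by
    rw [Real.norm_eq_abs, ← Real.dist_eq]; exact hdist.le
  have h1 : g (xs (φ n)) ≤ g z + ε := hδprop _ (hxsI _) hnorm
  have h2 : S - 1 / (φ n + 1 : ℝ) < g (xs (φ n)) := hxsg _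
  have h3 : 1 / (φ n + 1 : ℝ) ≤ 1 / (N₂ + 1 : ℝ) := by
    apply one_div_le_one_div_of_le (by positivity)
    have hle : N₂ ≤ φ n := le_trans (le_max_right N₁ N₂) (hφ.le_apply)
    have : (N₂ : ℝ) ≤ (φ n : ℝ) := Nat.cast_le.mpr hle
    linarith
  have h4 : 1 / (φ n + 1 : ℝ) < ε := h3.trans_lt hN₂
  rw [hε] at h1 h4
  linarith

/-- The supremum over a subtype, when a maximizer exists. -/
lemma ciSup_eq_of_max {α : Type*} {s : Set α} {f : α → ℝ} {z : α} (hz : z ∈ s)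
    (hmax : ∀ x ∈ s, f x ≤ f z) : (⨆ x : s, f x.1) = f z := by
  have : Nonempty s := ⟨⟨z, hz⟩⟩
  apply le_antisymm
  · exact ciSup_le fun x => hmax x.1 x.2
  · exact le_ciSup ⟨f z, by rintro _ ⟨x, rfl⟩; exact hmax x.1 x.2⟩ (⟨z, hz⟩ : s)

/-- For MLC pricing functions `p j : [0,1] → ℝ≥0` and continuous
valuations `u j : [0,1] → ℝ≥0`, letting `p x = ∑ j, p j (x j)` and
`v x = ∑ j, u j (x j)` on `[0,1]^m`, the revenue at infinite budget decomposes: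
`r(p|v,∞) = ∑ j, r(p j | u j, ∞)`. -/
theorem stmt12 (m : ℕ) (p u : Fin m → ℝ → ℝ)
    (hp_nonneg : ∀ j, ∀ x ∈ unitI, 0 ≤ p j x) (hp0 : ∀ j, p j 0 = 0)
    (hp_mono : ∀ j, MonotoneOn (p j) unitI)
    (hp_lc : ∀ j, LowerContOn unitI (p j))
    (hu_nonneg : ∀ j, ∀ x ∈ unitI, 0 ≤ u j x)
    (hu_cont : ∀ j, ContinuousOn (u j) unitI) :
    revenue (cube m) (fun x => ∑ j, p j (x j)) (fun x => ∑ j, u j (x j)) ⊤ =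
      ∑ j, revenue unitI (p j) (u j) ⊤ := by
  classical
  -- maximizers of u j - p j on unitI
  choose z hzI hzmax using fun j => exists_max (hp_nonneg j) (hp_lc j) (hu_cont j)
  set g : Fin m → ℝ → ℝ := fun j x => u j x - p j x with hg
  set P : (Fin m → ℝ) → ℝ := fun x => ∑ j, p j (x j) with hP
  set V : (Fin m → ℝ) → ℝ := fun x => ∑ j, u j (x j) with hV
  have hzcube : z ∈ cube m := mem_cube_iff.mpr hzI
  -- per-coordinate uStar
  have hU : ∀ j, uStar unitI (p j) (u j) ⊤ = g j (z j) := by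
    intro j
    unfold uStar
    rw [afford_top]
    exact ciSup_eq_of_max (hzI j) (hzmax j)
  -- cube uStar
  have hmaxcube : ∀ x ∈ cube m, V x - P x ≤ V z - P z := by
    intro x hx
    have : V x - P x = ∑ j, g j (x j) := by
      simp only [hV, hP, hg, ← Finset.sum_sub_distrib]
    rw [this]
    have : V z - P z = ∑ j, g j (z j) := by
      simp only [hV, hP, hg, ← Finset.sum_sub_distrib]
    rw [this]
    exact Finset.sum_le_sum fun j _ => hzmax j (x j) (mem_cube_iff.mp hx j)
  have hUcube : uStar (cube m) P V ⊤ = V z - P z := by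
    unfold uStar
    rw [afford_top]
    exact ciSup_eq_of_max hzcube hmaxcube
  -- demand characterization
  have hDj : ∀ j x, x ∈ demand unitI (p j) (u j) ⊤ ↔ x ∈ unitI ∧ g j x = g j (z j) := by
    intro j x
    unfold demand
    rw [afford_top, hU j]
    rfl
  have hDcube : ∀ x, x ∈ demand (cube m) P V ⊤ ↔
      x ∈ cube m ∧ ∀ j, x j ∈ demand unitI (p j) (u j) ⊤ := by
    intro x
    unfold demand
    rw [afford_top, hUcube]
    constructor
    · rintro ⟨hx, heq⟩
      refine ⟨hx, fun j => (hDj j (x j)).mpr ⟨mem_cube_iff.mp hx j, ?_⟩⟩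
      have hsum : ∑ j, g j (x j) = ∑ j, g j (z j) := by
        have e1 : V x - P x = ∑ j, g j (x j) := by
          simp only [hV, hP, hg, ← Finset.sum_sub_distrib]
        have e2 : V z - P z = ∑ j, g j (z j) := by
          simp only [hV, hP, hg, ← Finset.sum_sub_distrib]
        rw [← e1, ← e2]; exact heq
      exact (Finset.sum_eq_sum_iff_of_le
        (fun j _ => hzmax j (x j) (mem_cube_iff.mp hx j))).mp hsum j (Finset.mem_univ j)
    · rintro ⟨hx, hall⟩
      refine ⟨hx, ?_⟩
      have e1 : V x - P x = ∑ j, g j (x j) := by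
        simp only [hV, hP, hg, ← Finset.sum_sub_distrib]
      have e2 : V z - P z = ∑ j, g j (z j) := by
        simp only [hV, hP, hg, ← Finset.sum_sub_distrib]
      rw [e1, e2]
      exact Finset.sum_congr rfl fun j _ => ((hDj j (x j)).mp (hall j)).2
  -- demand sets are nonempty
  have hzDj : ∀ j, z j ∈ demand unitI (p j) (u j) ⊤ := fun j =>
    (hDj j (z j)).mpr ⟨hzI j, rfl⟩
  have hzDc : z ∈ demand (cube m) P V ⊤ := (hDcube z).mpr ⟨hzcube, hzDj⟩
  have hDjsub : ∀ j, demand unitI (p j) (u j) ⊤ ⊆ unitI := fun j x hx =>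
    ((hDj j x).mp hx).1
  -- boundedness of p on demand sets
  have hpbdd : ∀ j, ∀ x ∈ unitI, p j x ≤ p j 1 := fun j x hx =>
    hp_mono j hx one_mem_unitI hx.2
  have hbddj : ∀ j, BddAbove (Set.range fun y : demand unitI (p j) (u j) ⊤ => p j y.1) :=
    fun j => ⟨p j 1, by rintro _ ⟨y, rfl⟩; exact hpbdd j y.1 (hDjsub j y.2)⟩
  have hnej : ∀ j, Nonempty (demand unitI (p j) (u j) ⊤) := fun j => ⟨⟨z j, hzDj j⟩⟩
  have hnec : Nonempty (demand (cube m) P V ⊤) := ⟨⟨z, hzDc⟩⟩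
  have hbddc : BddAbove (Set.range fun y : demand (cube m) P V ⊤ => P y.1) := by
    refine ⟨∑ j, p j 1, ?_⟩
    rintro _ ⟨y, rfl⟩
    have hy := ((hDcube y.1).mp y.2).1
    exact Finset.sum_le_sum fun j _ => hpbdd j (y.1 j) (mem_cube_iff.mp hy j)
  -- the revenue equality
  apply le_antisymm
  · -- revenue cube ≤ ∑ revenue j
    apply ciSup_le
    intro x
    have hx := (hDcube x.1).mp x.2
    refine Finset.sum_le_sum fun j _ => ?_
    exact le_ciSup (hbddj j) (⟨x.1 j, hx.2 j⟩ : demand unitI (p j) (u j) ⊤)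
  · -- ∑ revenue j ≤ revenue cube
    by_contra hcon
    push_neg at hcon
    set ε : ℝ := (∑ j, revenue unitI (p j) (u j) ⊤ - revenue (cube m) P V ⊤) / 2 with hε
    have hεpos : 0 < ε := by simp only [hε]; linarith
    have hεm : 0 < ε / (m + 1) := by positivity
    -- pick near-maximizers of revenue per coordinate
    have hpick : ∀ j, ∃ y : demand unitI (p j) (u j) ⊤,
        revenue unitI (p j) (u j) ⊤ - ε / (m + 1) < p j y.1 := by
      intro j
      have := hnej j
      exact exists_lt_of_lt_ciSup (by
        show revenue unitI (p j) (u j) ⊤ - ε / (m + 1) < revenue unitI (p j) (u j) ⊤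
        linarith)
    choose y hy using hpick
    set x : Fin m → ℝ := fun j => (y j).1 with hx
    have hxD : x ∈ demand (cube m) P V ⊤ := by
      refine (hDcube x).mpr ⟨mem_cube_iff.mpr fun j => hDjsub j (y j).2, fun j => (y j).2⟩
    have h1 : P x ≤ revenue (cube m) P V ⊤ :=
      le_ciSup hbddc (⟨x, hxD⟩ : demand (cube m) P V ⊤)
    have h2 : ∑ j, revenue unitI (p j) (u j) ⊤ ≤ P x + m * (ε / (m + 1)) := by
      calc ∑ j, revenue unitI (p j) (u j) ⊤
          ≤ ∑ j, (p j (x j) + ε / (m + 1)) := by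
            refine Finset.sum_le_sum fun j _ => ?_
            have := hy j
            simp only [hx]
            linarith
        _ = P x + m * (ε / (m + 1)) := by
            rw [Finset.sum_add_distrib, Finset.sum_const, Finset.card_univ, Fintype.card_fin]
            simp [hP, nsmul_eq_mul]
    have h3 : (m : ℝ) * (ε / (m + 1)) ≤ ε := by
      rw [mul_div_assoc'] at *
      rw [div_le_iff₀ (by positivity)]
      have : (m : ℝ) ≤ m + 1 := by linarith
      nlinarith [hεpos.le]
    have : ∑ j, revenue unitI (p j) (u j) ⊤ ≤ revenue (cube m) P V ⊤ + ε := by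
      linarith
    simp only [hε] at this
    linarith

end
end

section
/- Consider a data market with n buyers and m datasets, where each buyer i ∈ [n] has budget b_i ∈ ℝ≥0 and value v_{i,j} ∈ ℝ≥0 for each dataset j ∈ [m]. For any price vector p ∈ ℝ≥0^m, define the pricing function p̄(x) = Σ_{j=1}^m p_j x_j and valuation v_i(x) = Σ_{j=1}^m v_{i,j} x_j on [0,1]^m. Then the revenue from each buyer i satisfies r(p̄|v_i,b_i) = min(b_i, Σ_{j ∈ [m] : v_{i,j} ≥ p_j} p_j). Moreover, there exists a price vector p̂ ∈ ℝ≥0^m with p̂_j ∈ {v_{i,j} : i ∈ [n]} for every j ∈ [m] such that r(p̄̂|v_i,b_i) ≥ r(p̄|v_i,b_i) for every buyer i ∈ [n], where p̄̂(x) = Σ_j p̂_j x_j. -/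
/-!
The affordable set is compact, so the net utility attains its maximum, the demand set is the
nonempty compact set of its maximizers, and the revenue is the price `p ⬝ᵥ y` of a demand point
`y` of largest price. A utility maximizer buys nothing of an item priced above its value
(dropping it raises the utility), so `p ⬝ᵥ y` is at most both `b` and the total price of the
items worth their price. If it were below both, some such item would be bought only partially,
and buying slightly more of it keeps the utility maximal while raising the price paid.

For the second part, round each `p j` up to the least value `v i j ≥ p j` (any `v i j` if there
is none): every buyer still wants each item she wanted before and pays at least as much for it.
-/

noncomputable section

open Finset

section Market

variable {E : Type*} {D : Set E} {p v : E → ℝ}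

theorem mem_afford_coe {b : ℝ} {x : E} : x ∈ afford D p (b : EReal) ↔ x ∈ D ∧ p x ≤ b := by
  simp only [afford, Set.mem_ofPred_eq, EReal.coe_le_coe_iff]

variable {b : EReal}

theorem uStar_eq_of_isMaxOn {x₀ : E} (hx₀ : x₀ ∈ afford D p b)
    (hmax : IsMaxOn (fun x => v x - p x) (afford D p b) x₀) : uStar D p v b = v x₀ - p x₀ :=
  hmax.iSup_eq hx₀

theorem mem_demand_iff_isMaxOn {x₀ x : E} (hx₀ : x₀ ∈ afford D p b)
    (hmax : IsMaxOn (fun x => v x - p x) (afford D p b) x₀) :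
    x ∈ demand D p v b ↔
      x ∈ afford D p b ∧ IsMaxOn (fun x => v x - p x) (afford D p b) x := by
  refine ⟨fun ⟨hx, hux⟩ => ⟨hx, fun z hz => ?_⟩,
    fun ⟨hx, hmaxx⟩ => ⟨hx, (uStar_eq_of_isMaxOn hx hmaxx).symm⟩⟩
  rw [uStar_eq_of_isMaxOn hx₀ hmax] at hux
  simpa only [Set.mem_ofPred_eq, hux] using hmax hz

theorem revenue_eq_of_isMaxOn {y : E} (hy : y ∈ demand D p v b)
    (hmax : IsMaxOn p (demand D p v b) y) : revenue D p v b = p y :=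
  hmax.iSup_eq hy

variable [TopologicalSpace E]

theorem isCompact_afford (hD : IsCompact D) (hp : Continuous p) : IsCompact (afford D p b) :=
  hD.inter_right (isClosed_Iic.preimage (continuous_coe_real_ereal.comp hp))

theorem exists_isMaxOn_utility (hD : IsCompact D) (hp : Continuous p) (hv : Continuous v)
    (hne : (afford D p b).Nonempty) :
    ∃ x₀ ∈ afford D p b, IsMaxOn (fun x => v x - p x) (afford D p b) x₀ :=
  (isCompact_afford hD hp).exists_isMaxOn hne (hv.sub hp).continuousOn

theorem exists_isMaxOn_demand (hD : IsCompact D) (hp : Continuous p) (hv : Continuous v)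
    (hne : (afford D p b).Nonempty) : ∃ y ∈ demand D p v b, IsMaxOn p (demand D p v b) y := by
  obtain ⟨x₀, hx₀, hmax⟩ := exists_isMaxOn_utility hD hp hv hne
  have hcpt : IsCompact (demand D p v b) :=
    (isCompact_afford hD hp).inter_right (isClosed_singleton.preimage (hv.sub hp))
  exact hcpt.exists_isMaxOn ⟨x₀, hx₀, (uStar_eq_of_isMaxOn hx₀ hmax).symm⟩ hp.continuousOn

end Market

section Linear

variable {ι : Type*} {p v : ι → ℝ} {b : ℝ}

theorem add_single_mem_Icc [DecidableEq ι] {y : ι → ℝ} (hy : y ∈ Set.Icc 0 1) {j : ι} {t : ℝ}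
    (h0 : 0 ≤ y j + t) (h1 : y j + t ≤ 1) : y + Pi.single j t ∈ Set.Icc (0 : ι → ℝ) 1 := by
  constructor <;> intro k <;> rcases eq_or_ne k j with rfl | hk
  · simpa using h0
  · simpa [hk] using hy.1 k
  · simpa using h1
  · simpa [hk] using hy.2 k

variable [Fintype ι]

theorem dotProduct_eq_sum_filter {x : ι → ℝ} (h : ∀ j, v j < p j → x j = 0) :
    p ⬝ᵥ x = ∑ j ∈ univ.filter (fun j => p j ≤ v j), p j * x j := by
  refine (sum_filter_of_ne fun j _ hj => ?_).symm
  by_contra! hvp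
  exact hj (by rw [h j hvp, mul_zero])

variable [DecidableEq ι]

theorem eq_zero_of_isMaxOn_utility (hp : 0 ≤ p) {y : ι → ℝ}
    (hy : y ∈ afford (Set.Icc 0 1) (p ⬝ᵥ ·) b)
    (hmax : IsMaxOn (fun x => v ⬝ᵥ x - p ⬝ᵥ x) (afford (Set.Icc 0 1) (p ⬝ᵥ ·) b) y) {j : ι}
    (hj : v j < p j) : y j = 0 := by
  obtain ⟨hyI, hyb⟩ := mem_afford_coe.1 hy
  have hz : y + Pi.single j (-y j) ∈ afford (Set.Icc 0 1) (p ⬝ᵥ ·) b := by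
    refine mem_afford_coe.2 ⟨add_single_mem_Icc hyI (by simp) (by simp), ?_⟩
    simp only [dotProduct_add, dotProduct_single]
    nlinarith [mul_nonneg (hp j) (hyI.1 j)]
  have hle := hmax hz
  simp only [Set.mem_ofPred_eq, dotProduct_add, dotProduct_single] at hle
  refine le_antisymm ?_ (hyI.1 j)
  by_contra! hpos
  nlinarith [mul_pos (sub_pos.2 hj) hpos]

theorem isMaxOn_utility_add_single {y : ι → ℝ} (hy : y ∈ afford (Set.Icc 0 1) (p ⬝ᵥ ·) b)
    (hmax : IsMaxOn (fun x => v ⬝ᵥ x - p ⬝ᵥ x) (afford (Set.Icc 0 1) (p ⬝ᵥ ·) b) y) {j : ι}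
    (hj : p j ≤ v j) {ε : ℝ} (hε : 0 ≤ ε) (h1 : y j + ε ≤ 1) (hb : p ⬝ᵥ y + p j * ε ≤ b) :
    y + Pi.single j ε ∈ afford (Set.Icc 0 1) (p ⬝ᵥ ·) b ∧
      IsMaxOn (fun x => v ⬝ᵥ x - p ⬝ᵥ x) (afford (Set.Icc 0 1) (p ⬝ᵥ ·) b) (y + Pi.single j ε) := by
  obtain ⟨hyI, -⟩ := mem_afford_coe.1 hy
  refine ⟨mem_afford_coe.2 ⟨add_single_mem_Icc hyI (add_nonneg (hyI.1 j) hε) h1, ?_⟩,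
    fun z hz => ?_⟩
  · simpa only [dotProduct_add, dotProduct_single] using hb
  · have hle := hmax hz
    simp only [Set.mem_ofPred_eq, dotProduct_add, dotProduct_single] at hle ⊢
    nlinarith

theorem min_le_dotProduct_of_isMaxOn (hp : 0 ≤ p) {y : ι → ℝ}
    (hy : y ∈ afford (Set.Icc 0 1) (p ⬝ᵥ ·) b)
    (hmax : IsMaxOn (fun x => v ⬝ᵥ x - p ⬝ᵥ x) (afford (Set.Icc 0 1) (p ⬝ᵥ ·) b) y)
    (hbest : ∀ z ∈ afford (Set.Icc 0 1) (p ⬝ᵥ ·) b,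
      IsMaxOn (fun x => v ⬝ᵥ x - p ⬝ᵥ x) (afford (Set.Icc 0 1) (p ⬝ᵥ ·) b) z → p ⬝ᵥ z ≤ p ⬝ᵥ y) :
    min b (∑ j ∈ univ.filter (fun j => p j ≤ v j), p j) ≤ p ⬝ᵥ y := by
  obtain ⟨hyI, -⟩ := mem_afford_coe.1 hy
  by_contra! hlt
  have hltT : ∑ j ∈ univ.filter (fun j => p j ≤ v j), p j * y j <
      ∑ j ∈ univ.filter (fun j => p j ≤ v j), p j :=
    dotProduct_eq_sum_filter (v := v) (fun _ => eq_zero_of_isMaxOn_utility hp hy hmax) ▸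
      hlt.trans_le (min_le_right _ _)
  obtain ⟨j, hjA, hj⟩ := exists_lt_of_sum_lt hltT
  have hyj1 : y j ≤ 1 := hyI.2 j
  have hpj : 0 < p j := lt_of_le_of_ne (hp j) fun h => by simp [← h] at hj
  have hyj : y j < 1 := by nlinarith
  set ε := min (1 - y j) ((b - p ⬝ᵥ y) / p j)
  have hε : 0 < ε :=
    lt_min (by linarith) (div_pos (by linarith [hlt.trans_le (min_le_left _ _)]) hpj)
  obtain ⟨hz, hzmax⟩ := isMaxOn_utility_add_single hy hmax (mem_filter.1 hjA).2 hε.le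
    (by linarith [min_le_left (1 - y j) ((b - p ⬝ᵥ y) / p j)])
    (by nlinarith [(le_div_iff₀ hpj).1 (min_le_right (1 - y j) ((b - p ⬝ᵥ y) / p j))])
  have hle := hbest _ hz hzmax
  simp only [dotProduct_add, dotProduct_single] at hle
  nlinarith

theorem revenue_linear (hb : 0 ≤ b) (hp : 0 ≤ p) :
    revenue (Set.Icc 0 1) (p ⬝ᵥ ·) (v ⬝ᵥ ·) b =
      min b (∑ j ∈ univ.filter (fun j => p j ≤ v j), p j) := by
  have hcont (c : ι → ℝ) : Continuous (c ⬝ᵥ ·) := continuous_const.dotProduct continuous_id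
  have h0 : (0 : ι → ℝ) ∈ afford (Set.Icc 0 1) (p ⬝ᵥ ·) b :=
    mem_afford_coe.2 ⟨⟨le_rfl, zero_le_one⟩, by simpa using hb⟩
  obtain ⟨x₀, hx₀, hmax₀⟩ := exists_isMaxOn_utility isCompact_Icc (hcont p) (hcont v) ⟨0, h0⟩
  obtain ⟨y, hy, hmaxy⟩ := exists_isMaxOn_demand isCompact_Icc (hcont p) (hcont v) ⟨0, h0⟩
  have hdem (x : ι → ℝ) := mem_demand_iff_isMaxOn (x := x) hx₀ hmax₀
  obtain ⟨hyA, hyU⟩ := (hdem y).1 hy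
  obtain ⟨hyI, hyb⟩ := mem_afford_coe.1 hyA
  rw [revenue_eq_of_isMaxOn hy hmaxy]
  refine le_antisymm (le_min hyb ?_) <|
    min_le_dotProduct_of_isMaxOn hp hyA hyU fun z hz hzU => hmaxy ((hdem z).2 ⟨hz, hzU⟩)
  rw [dotProduct_eq_sum_filter fun _ => eq_zero_of_isMaxOn_utility hp hyA hyU]
  exact sum_le_sum fun j _ => mul_le_of_le_one_right (hp j) (hyI.2 j)

end Linear

theorem exists_least_value_ge {ι : Type*} [Fintype ι] [Nonempty ι] (f : ι → ℝ) (a : ℝ) :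
    ∃ i, ∀ k, a ≤ f k → a ≤ f i ∧ f i ≤ f k := by
  by_cases h : ∃ k, a ≤ f k
  · obtain ⟨k, hk⟩ := h
    obtain ⟨i, hi, hmin⟩ :=
      (univ.filter fun k => a ≤ f k).exists_min_image f ⟨k, mem_filter.2 ⟨mem_univ k, hk⟩⟩
    exact ⟨i, fun k hk => ⟨(mem_filter.1 hi).2, hmin k (mem_filter.2 ⟨mem_univ k, hk⟩)⟩⟩
  · simp only [not_exists, not_le] at h
    exact ⟨Classical.arbitrary ι, fun k hk => absurd hk (not_le.2 (h k))⟩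

theorem sum_filter_le_sum_filter_of_between {ι : Type*} [Fintype ι] {p q v : ι → ℝ}
    (hq : 0 ≤ q) (h : ∀ j, p j ≤ v j → p j ≤ q j ∧ q j ≤ v j) :
    ∑ j ∈ univ.filter (fun j => p j ≤ v j), p j ≤
      ∑ j ∈ univ.filter (fun j => q j ≤ v j), q j :=
  calc _ ≤ ∑ j ∈ univ.filter (fun j => p j ≤ v j), q j :=
        sum_le_sum fun j hj => (h j (mem_filter.1 hj).2).1
    _ ≤ _ := sum_le_sum_of_subset_of_nonneg
        (fun j hj => mem_filter.2 ⟨mem_univ j, (h j (mem_filter.1 hj).2).2⟩) fun j _ _ => hq j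

/-- In a data market with `n ≥ 1` buyers (budgets `b i ≥ 0`, values
`v i j ≥ 0`) and linear prices `p j ≥ 0`, the revenue from buyer `i` under the linear
pricing `p̄(x) = ∑ j, p j * x j` equals `min (b i) (∑_{j : v i j ≥ p j} p j)`; moreover
there is a price vector `p̂` with every `p̂ j ∈ {v i j : i}` earning at least as much
revenue from every buyer. -/
theorem stmt14 (n m : ℕ) (hn : 0 < n) (b : Fin n → ℝ) (hb : ∀ i, 0 ≤ b i)
    (v : Fin n → Fin m → ℝ) (hv : ∀ i j, 0 ≤ v i j)
    (p : Fin m → ℝ) (hp : ∀ j, 0 ≤ p j) :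
    (∀ i : Fin n,
      revenue (cube m) (fun x => ∑ j, p j * x j) (fun x => ∑ j, v i j * x j) (b i : EReal)
        = min (b i) (∑ j ∈ Finset.univ.filter (fun j => p j ≤ v i j), p j)) ∧
    ∃ phat : Fin m → ℝ, (∀ j, ∃ i, phat j = v i j) ∧
      ∀ i : Fin n,
        revenue (cube m) (fun x => ∑ j, phat j * x j) (fun x => ∑ j, v i j * x j)
            (b i : EReal) ≥
          revenue (cube m) (fun x => ∑ j, p j * x j) (fun x => ∑ j, v i j * x j)
            (b i : EReal) := by
  have hrev (q : Fin m → ℝ) (hq : 0 ≤ q) (i : Fin n) :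
      revenue (cube m) (fun x => ∑ j, q j * x j) (fun x => ∑ j, v i j * x j) (b i : EReal) =
        min (b i) (∑ j ∈ univ.filter (fun j => q j ≤ v i j), q j) :=
    revenue_linear (hb i) hq
  have : Nonempty (Fin n) := ⟨⟨0, hn⟩⟩
  choose pick hpick using fun j => exists_least_value_ge (fun i => v i j) (p j)
  refine ⟨hrev p hp, fun j => v (pick j) j, fun j => ⟨pick j, rfl⟩, fun i => ?_⟩
  rw [hrev p hp, hrev _ fun j => hv _ j]
  exact min_le_min_left _ (sum_filter_le_sum_filter_of_between (fun j => hv _ j) fun j => hpick j i)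

end
end

section
/- Fix budgets b_i ≥ 0 and values v_{i,j} ≥ 0 for buyers i ∈ [n] and datasets j ∈ [m]. For every n-tuple (S_1, …, S_n) of pairwise disjoint subsets of [m], define prices p_j = v_{i,j} if j ∈ S_i, and p_j = 0 if j ∉ ∪_i S_i, and define the revenue r(S_1, …, S_n) = Σ_{i=1}^n min(b_i, Σ_{j ∈ [m] : v_{i,j} ≥ p_j} p_j). Then r is monotone and n-submodular. -/
noncomputable section

/-- The price vector induced by a tuple `S` of (pairwise disjoint) subsets of `[m]`:
`p j = v i j` if `j ∈ S i`, and `p j = 0` if `j` lies in no `S i`.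
(For pairwise disjoint tuples at most one summand below is nonzero.) -/
def pricesOf {n m : ℕ} (v : Fin n → Fin m → ℝ) (S : Fin n → Finset (Fin m))
    (j : Fin m) : ℝ :=
  ∑ i, if j ∈ S i then v i j else 0

/-- The revenue of the linear pricing induced by the tuple `S`:
`r(S) = ∑ i, min (b i) (∑_{j : v i j ≥ p j} p j)`. -/
def revTuple {n m : ℕ} (b : Fin n → ℝ) (v : Fin n → Fin m → ℝ)
    (S : Fin n → Finset (Fin m)) : ℝ :=
  ∑ i, min (b i)
    (∑ j ∈ Finset.univ.filter (fun j => pricesOf v S j ≤ v i j), pricesOf v S j)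

/-- The tuple `S` consists of pairwise disjoint subsets. -/
def PairwiseDisjointTuple {n m : ℕ} (S : Fin n → Finset (Fin m)) : Prop :=
  ∀ i i' : Fin n, i ≠ i' → Disjoint (S i) (S i')

/-- The meet `(S ⊓ T) i = S i ∩ T i` of two tuples. -/
def tupleInf {n m : ℕ} (S T : Fin n → Finset (Fin m)) : Fin n → Finset (Fin m) :=
  fun i => S i ∩ T i

/-- The join `(S ⊔ T) i = (S i ∪ T i) \ ⋃_{i' ≠ i} (S i' ∪ T i')` of two tuples. -/
def tupleSup {n m : ℕ} (S T : Fin n → Finset (Fin m)) : Fin n → Finset (Fin m) :=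
  fun i => (S i ∪ T i) \ (Finset.univ.erase i).biUnion (fun i' => S i' ∪ T i')

namespace Stmt15Aux

variable {n m : ℕ} (v : Fin n → Fin m → ℝ)

lemma prices_nonneg (hv : ∀ i j, 0 ≤ v i j) (S : Fin n → Finset (Fin m)) (j : Fin m) :
    0 ≤ pricesOf v S j := by
  refine Finset.sum_nonneg fun i _ => ?_
  by_cases h : j ∈ S i <;> simp [h, hv i j]

lemma prices_eq {S : Fin n → Finset (Fin m)} (hS : PairwiseDisjointTuple S)
    {i : Fin n} {j : Fin m} (h : j ∈ S i) : pricesOf v S j = v i j := by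
  unfold pricesOf
  rw [Finset.sum_eq_single i]
  · exact if_pos h
  · intro i' _ hne
    exact if_neg fun hj' => (Finset.disjoint_left.mp (hS i' i hne) hj') h
  · intro hi; exact absurd (Finset.mem_univ i) hi

lemma prices_zero {S : Fin n → Finset (Fin m)} {j : Fin m} (h : ∀ i, j ∉ S i) :
    pricesOf v S j = 0 := by
  unfold pricesOf
  exact Finset.sum_eq_zero fun i _ => if_neg (h i)

lemma sup_disjoint (S T : Fin n → Finset (Fin m)) :
    PairwiseDisjointTuple (tupleSup S T) := by
  intro i i' hne
  rw [Finset.disjoint_left]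
  intro j hj hj'
  simp only [tupleSup, Finset.mem_sdiff, Finset.mem_union, Finset.mem_biUnion,
    Finset.mem_erase, not_exists, not_and, not_or] at hj hj'
  have h2 := hj'.2 i ⟨hne, Finset.mem_univ i⟩
  rcases hj.1 with h | h
  · exact h2.1 h
  · exact h2.2 h

lemma inf_disjoint {S : Fin n → Finset (Fin m)} (hS : PairwiseDisjointTuple S)
    (T : Fin n → Finset (Fin m)) : PairwiseDisjointTuple (tupleInf S T) := by
  intro i i' hne
  exact Finset.disjoint_of_subset_left Finset.inter_subset_left
    (Finset.disjoint_of_subset_right Finset.inter_subset_left (hS i i' hne))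

lemma mem_sup {S T : Fin n → Finset (Fin m)} {i : Fin n} {j : Fin m}
    (h1 : j ∈ S i ∨ j ∈ T i) (h2 : ∀ i', i' ≠ i → j ∉ S i' ∧ j ∉ T i') :
    j ∈ tupleSup S T i := by
  simp only [tupleSup, Finset.mem_sdiff, Finset.mem_union, Finset.mem_biUnion,
    Finset.mem_erase, not_exists, not_and, not_or]
  exact ⟨h1, fun i' hi' => (h2 i' hi'.1)⟩

lemma sup_empty {S T : Fin n → Finset (Fin m)} {i i' : Fin n} {j : Fin m}
    (hne : i ≠ i') (hi : j ∈ S i) (hi' : j ∈ T i') :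
    ∀ l, j ∉ tupleSup S T l := by
  intro l hl
  simp only [tupleSup, Finset.mem_sdiff, Finset.mem_union, Finset.mem_biUnion,
    Finset.mem_erase, not_exists, not_and, not_or] at hl
  by_cases h : l = i
  · subst h
    exact (hl.2 i' ⟨hne.symm, Finset.mem_univ i'⟩).2 hi'
  · exact (hl.2 i ⟨fun h' => h h'.symm, Finset.mem_univ i⟩).1 hi


lemma phi_nonneg (hv : ∀ i j, 0 ≤ v i j) (S : Fin n → Finset (Fin m))
    (k : Fin n) (j : Fin m) :
    0 ≤ if pricesOf v S j ≤ v k j then pricesOf v S j else 0 := by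
  split_ifs
  · exact prices_nonneg v hv S j
  · exact le_rfl

lemma inf_eq_or {S T : Fin n → Finset (Fin m)} (hS : PairwiseDisjointTuple S)
    (hT : PairwiseDisjointTuple T) (j : Fin m) :
    (pricesOf v (tupleInf S T) j = pricesOf v S j ∧
     pricesOf v (tupleInf S T) j = pricesOf v T j) ∨
    pricesOf v (tupleInf S T) j = 0 := by
  by_cases h : ∃ i, j ∈ S i ∧ j ∈ T i
  · obtain ⟨i, h1, h2⟩ := h
    left
    have hm : j ∈ tupleInf S T i := Finset.mem_inter.mpr ⟨h1, h2⟩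
    rw [prices_eq v (inf_disjoint hS T) hm, prices_eq v hS h1, prices_eq v hT h2]
    exact ⟨rfl, rfl⟩
  · right
    exact prices_zero v fun i hi => h ⟨i, Finset.mem_inter.mp hi⟩

lemma pair_cases {S T : Fin n → Finset (Fin m)} (hS : PairwiseDisjointTuple S)
    (hT : PairwiseDisjointTuple T) (j : Fin m) :
    (pricesOf v (tupleSup S T) j = pricesOf v S j ∧
     pricesOf v (tupleInf S T) j = pricesOf v T j) ∨
    (pricesOf v (tupleSup S T) j = pricesOf v T j ∧
     pricesOf v (tupleInf S T) j = pricesOf v S j) ∨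
    (pricesOf v (tupleSup S T) j = 0 ∧ pricesOf v (tupleInf S T) j = 0) := by
  by_cases hs : ∃ i, j ∈ S i
  · obtain ⟨i, hi⟩ := hs
    by_cases ht : ∃ i', j ∈ T i'
    · obtain ⟨i', hi'⟩ := ht
      by_cases he : i = i'
      · subst he
        left
        have hsup : j ∈ tupleSup S T i := mem_sup (Or.inl hi) fun l hl =>
          ⟨Finset.disjoint_left.mp (hS i l fun h => hl h.symm) hi,
           Finset.disjoint_left.mp (hT i l fun h => hl h.symm) hi'⟩
        have hinf : j ∈ tupleInf S T i := Finset.mem_inter.mpr ⟨hi, hi'⟩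
        rw [prices_eq v (sup_disjoint S T) hsup, prices_eq v (inf_disjoint hS T) hinf,
          prices_eq v hS hi, prices_eq v hT hi']
        exact ⟨rfl, rfl⟩
      · right; right
        constructor
        · exact prices_zero v (sup_empty he hi hi')
        · refine prices_zero v fun l hl => ?_
          obtain ⟨hl1, hl2⟩ := Finset.mem_inter.mp hl
          have e1 : l = i := by
            by_contra hne
            exact Finset.disjoint_left.mp (hS l i hne) hl1 hi
          have e2 : l = i' := by
            by_contra hne
            exact Finset.disjoint_left.mp (hT l i' hne) hl2 hi'
          exact he (e1 ▸ e2)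
    · left
      have hsup : j ∈ tupleSup S T i := mem_sup (Or.inl hi) fun l hl =>
        ⟨Finset.disjoint_left.mp (hS i l fun h => hl h.symm) hi,
         fun h => ht ⟨l, h⟩⟩
      rw [prices_eq v (sup_disjoint S T) hsup, prices_eq v hS hi,
        prices_zero v (S := T) fun l h => ht ⟨l, h⟩,
        prices_zero v (S := tupleInf S T) fun l hl =>
          ht ⟨l, (Finset.mem_inter.mp hl).2⟩]
      exact ⟨rfl, rfl⟩
  · by_cases ht : ∃ i', j ∈ T i'
    · obtain ⟨i', hi'⟩ := ht
      right; left
      have hsup : j ∈ tupleSup S T i' := mem_sup (Or.inr hi') fun l hl =>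
        ⟨fun h => hs ⟨l, h⟩,
         Finset.disjoint_left.mp (hT i' l fun h => hl h.symm) hi'⟩
      rw [prices_eq v (sup_disjoint S T) hsup, prices_eq v hT hi',
        prices_zero v (S := S) fun l h => hs ⟨l, h⟩,
        prices_zero v (S := tupleInf S T) fun l hl =>
          hs ⟨l, (Finset.mem_inter.mp hl).1⟩]
      exact ⟨rfl, rfl⟩
    · right; right
      constructor
      · refine prices_zero v fun l hl => ?_
        rcases Finset.mem_union.mp (Finset.mem_sdiff.mp hl).1 with h | h
        · exact hs ⟨l, h⟩
        · exact ht ⟨l, h⟩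
      · exact prices_zero v fun l hl => hs ⟨l, (Finset.mem_inter.mp hl).1⟩

lemma prices_update_ne {S : Fin n → Finset (Fin m)} {i : Fin n} {e j : Fin m}
    (hj : j ≠ e) :
    pricesOf v (Function.update S i (insert e (S i))) j = pricesOf v S j := by
  unfold pricesOf
  refine Finset.sum_congr rfl fun l _ => ?_
  by_cases hl : l = i
  · subst hl; simp [Function.update_self, Finset.mem_insert, hj]
  · rw [Function.update_of_ne hl]

lemma prices_update_self {S : Fin n → Finset (Fin m)} {i : Fin n} {e : Fin m}
    (he : ∀ l, e ∉ S l) :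
    pricesOf v (Function.update S i (insert e (S i))) e = v i e := by
  unfold pricesOf
  rw [Finset.sum_eq_single i]
  · rw [Function.update_self]; exact if_pos (Finset.mem_insert_self e _)
  · intro l _ hl; rw [Function.update_of_ne hl]; exact if_neg (he l)
  · intro h; exact absurd (Finset.mem_univ i) h

lemma min_lemma {b x y A C : ℝ} (hyA : y ≤ A) (hyC : y ≤ C)
    (hsum : x + y ≤ A + C) : min b x + min b y ≤ min b A + min b C := by
  simp only [min_def]
  split_ifs <;> linarith


lemma rev_eq (b : Fin n → ℝ) (S : Fin n → Finset (Fin m)) :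
    revTuple b v S =
      ∑ i, min (b i)
        (∑ j, if pricesOf v S j ≤ v i j then pricesOf v S j else 0) := by
  unfold revTuple
  simp only [Finset.sum_filter]

end Stmt15Aux

open Stmt15Aux

/-- The revenue function `r(S_1, …, S_n)` on tuples of pairwise
disjoint subsets of `[m]` is monotone (inserting a fresh dataset into any part does
not decrease revenue) and `n`-submodular
(`r(S) + r(T) ≥ r(S ⊔ T) + r(S ⊓ T)`). -/
theorem stmt15 (n m : ℕ) (b : Fin n → ℝ) (hb : ∀ i, 0 ≤ b i)
    (v : Fin n → Fin m → ℝ) (hv : ∀ i j, 0 ≤ v i j) :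
    (∀ S : Fin n → Finset (Fin m), PairwiseDisjointTuple S →
      ∀ (i : Fin n) (e : Fin m), (∀ l, e ∉ S l) →
        revTuple b v S ≤ revTuple b v (Function.update S i (insert e (S i)))) ∧
    (∀ S T : Fin n → Finset (Fin m),
      PairwiseDisjointTuple S → PairwiseDisjointTuple T →
        revTuple b v (tupleSup S T) + revTuple b v (tupleInf S T) ≤
          revTuple b v S + revTuple b v T) := by
  constructor
  · intro S hSd i e he
    rw [rev_eq, rev_eq]
    refine Finset.sum_le_sum fun k _ => min_le_min le_rfl ?_
    refine Finset.sum_le_sum fun j _ => ?_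
    by_cases hj : j = e
    · subst hj
      rw [prices_zero v he, prices_update_self v he]
      simp only [ite_self]
      split_ifs
      · exact hv i j
      · exact le_rfl
    · rw [prices_update_ne v hj]
  · intro S T hS hT
    rw [rev_eq, rev_eq, rev_eq, rev_eq]
    rw [← Finset.sum_add_distrib, ← Finset.sum_add_distrib]
    refine Finset.sum_le_sum fun k _ => ?_
    refine min_lemma ?_ ?_ ?_
    · refine Finset.sum_le_sum fun j _ => ?_
      rcases inf_eq_or v hS hT j with ⟨h1, _⟩ | h0
      · rw [h1]
      · rw [h0]; simp only [ite_self]; exact phi_nonneg v hv S k j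
    · refine Finset.sum_le_sum fun j _ => ?_
      rcases inf_eq_or v hS hT j with ⟨_, h2⟩ | h0
      · rw [h2]
      · rw [h0]; simp only [ite_self]; exact phi_nonneg v hv T k j
    · rw [← Finset.sum_add_distrib, ← Finset.sum_add_distrib]
      refine Finset.sum_le_sum fun j _ => ?_
      rcases pair_cases v hS hT j with ⟨h1, h2⟩ | ⟨h1, h2⟩ | ⟨h1, h2⟩
      · rw [h1, h2]
      · rw [h1, h2]; exact le_of_eq (add_comm _ _)
      · rw [h1, h2]
        simp only [ite_self, add_zero]
        exact add_nonneg (phi_nonneg v hv S k j) (phi_nonneg v hv T k j)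

end
end

section
/- Consider n buyers with budgets b_i ≥ 0 and values v_{i,j} ≥ 0 for m datasets, and a price vector p ∈ ℝ≥0^m. If p is clearable, then for every dataset j ∈ [m] there exist a buyer i ∈ [n] and a bundle x ∈ [0,1]^m such that x_j = 1, Σ_{k=1}^m p_k x_k ≤ b_i, and Σ_{k=1}^m v_{i,k} x_k − Σ_{k=1}^m p_k x_k ≥ Σ_{k=1}^m v_{i,k} y_k − Σ_{k=1}^m p_k y_k for every y ∈ [0,1]^m with Σ_{k=1}^m p_k y_k ≤ b_i. -/
noncomputable section

/-- Buyer `i`'s desire at prices `p`: `d_i(p) = ∑_{j : v i j ≥ p j} p j`. -/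
def desire {n m : ℕ} (v : Fin n → Fin m → ℝ) (p : Fin m → ℝ) (i : Fin n) : ℝ :=
  ∑ j ∈ Finset.univ.filter (fun j => p j ≤ v i j), p j

/-- A price vector `p` is clearable if for every dataset `j`, either `p j = 0` or
there is a satisfied buyer `i` (i.e. `d_i(p) ≤ b i`) with `v i j ≥ p j`. -/
def Clearable {n m : ℕ} (b : Fin n → ℝ) (v : Fin n → Fin m → ℝ)
    (p : Fin m → ℝ) : Prop :=
  ∀ j : Fin m, p j = 0 ∨ ∃ i : Fin n, desire v p i ≤ b i ∧ p j ≤ v i j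

/-- If the price vector `p` is clearable, then for every dataset `j`
some buyer `i` has an optimal affordable bundle `x` (utility-maximizing among all
affordable bundles) with `x j = 1`; i.e. a market-clearing allocation exists. -/
theorem stmt17 (n m : ℕ) (hn : 0 < n) (b : Fin n → ℝ) (hb : ∀ i, 0 ≤ b i)
    (v : Fin n → Fin m → ℝ) (hv : ∀ i j, 0 ≤ v i j)
    (p : Fin m → ℝ) (hp : ∀ j, 0 ≤ p j) (hclear : Clearable b v p) :
    ∀ j : Fin m, ∃ (i : Fin n) (x : Fin m → ℝ), x ∈ cube m ∧ x j = 1 ∧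
      (∑ k, p k * x k) ≤ b i ∧
      ∀ y ∈ cube m, (∑ k, p k * y k) ≤ b i →
        (∑ k, v i k * y k) - (∑ k, p k * y k) ≤
          (∑ k, v i k * x k) - (∑ k, p k * x k) := by
  intro j
  rcases hclear j with hpj | ⟨i, hdes, hvij⟩
  · -- `p j = 0` : take an optimal bundle and set coordinate `j` to 1 for free
    set i : Fin n := ⟨0, hn⟩
    set K : Set (Fin m → ℝ) := cube m ∩ {y | (∑ k, p k * y k) ≤ b i} with hK
    have hKc : IsCompact K :=
      isCompact_Icc.inter_right (isClosed_le (by fun_prop) continuous_const)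
    have hKne : K.Nonempty := by
      refine ⟨0, ⟨le_refl _, fun k => zero_le_one⟩, ?_⟩
      simp [hb i]
    have hcont : ContinuousOn (fun y : Fin m → ℝ =>
        (∑ k, v i k * y k) - (∑ k, p k * y k)) K := by fun_prop
    obtain ⟨x₀, hx₀K, hmax⟩ := hKc.exists_isMaxOn hKne hcont
    obtain ⟨⟨hx₀l, hx₀u⟩, hx₀b⟩ := hx₀K
    set x : Fin m → ℝ := Function.update x₀ j 1 with hxdef
    have hpsum : (∑ k, p k * x k) = ∑ k, p k * x₀ k := by
      refine Finset.sum_congr rfl fun k _ => ?_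
      rcases eq_or_ne k j with rfl | hk
      · simp [hxdef, hpj]
      · simp [hxdef, Function.update_of_ne hk]
    have hvsum : (∑ k, v i k * x₀ k) ≤ ∑ k, v i k * x k := by
      refine Finset.sum_le_sum fun k _ => ?_
      rcases eq_or_ne k j with rfl | hk
      · simpa [hxdef] using mul_le_mul_of_nonneg_left (hx₀u k) (hv i k)
      · simp [hxdef, Function.update_of_ne hk]
    refine ⟨i, x, ⟨fun k => ?_, fun k => ?_⟩, by simp [hxdef], ?_, ?_⟩
    · rcases eq_or_ne k j with rfl | hk
      · simp [hxdef]
      · simpa [hxdef, Function.update_of_ne hk] using hx₀l k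
    · rcases eq_or_ne k j with rfl | hk
      · simp [hxdef]
      · simpa [hxdef, Function.update_of_ne hk] using hx₀u k
    · rw [hpsum]; exact hx₀b
    · intro y hy hyb
      have := hmax (Set.mem_inter hy hyb)
      simp only at this
      rw [hpsum]
      exact this.trans (by linarith)
  · -- satisfied buyer case: take the indicator of `{k | p k ≤ v i k}`
    set x : Fin m → ℝ := fun k => if p k ≤ v i k then 1 else 0 with hxdef
    have hxcube : x ∈ cube m := by
      constructor <;> intro k <;> simp only [hxdef, Pi.zero_apply, Pi.one_apply] <;>
        split <;> norm_num
    have hcost : (∑ k, p k * x k) = desire v p i := by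
      rw [desire, Finset.sum_filter]
      refine Finset.sum_congr rfl fun k _ => ?_
      simp only [hxdef]; split <;> simp
    refine ⟨i, x, hxcube, by simp [hxdef, hvij], by rw [hcost]; exact hdes, ?_⟩
    intro y hy _
    have key : ∀ z : Fin m → ℝ,
        (∑ k, v i k * z k) - (∑ k, p k * z k) = ∑ k, (v i k - p k) * z k := by
      intro z; rw [← Finset.sum_sub_distrib]; exact Finset.sum_congr rfl fun k _ => by ring
    rw [key, key]
    refine Finset.sum_le_sum fun k _ => ?_
    rcases le_or_gt (p k) (v i k) with h | h
    · have : y k ≤ x k := by simp only [hxdef, if_pos h]; exact hy.2 k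
      exact mul_le_mul_of_nonneg_left this (by linarith)
    · have hx0 : x k = 0 := by simp [hxdef, not_le.2 h]
      rw [hx0, mul_zero]
      exact mul_nonpos_of_nonpos_of_nonneg (by linarith) (hy.1 k)

end
end
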